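/- arXiv:2405.01260 — 7 statements merged into one kernel-verified Lean document; each statement's English description precedes it below -/
import Mathlib

section
/- Consider K agents running synchronous federated inference. Almost surely, the fusion-center belief on the true hypothesis converges to one: lim_{i→∞} μ_i(θ°) = 1 with probability 1. Precisely: for each i ≥ 1 and agent k let ψ_{k,i}(θ) = f_k(ξ_{k,i}|θ) μ__{i-1}(θ) / ∑_{θ'} f_k(ξ_{k,i}|θ') μ_{i-1}(θ'), and let μ_i(θ) = ∏_{k=1}^K ψ_{k,i}(θ)^{π_k} / ∑_{θ'} ∏_{k=1}^K ψ_{k,i}(θ')^{π_k}. Then μ_i(θ°) → 1 almost surely. -/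
/-!
The beliefs stay strictly positive, and because the weights `π k` sum to one, all normalising
constants cancel from the log-odds `log μₙ(θ) - log μₙ(θ₀)`: each round simply adds
`∑ₖ π k · log (f k θ (ξ k n) / f k θ₀ (ξ k n))`. By the strong law of large numbers the `k`-th
log-likelihood sum behaves like `-n · d k θ`, so the log-odds drift to `-∞` at the linear rate
`∑ₖ π k · d k θ`, which is positive by Gibbs' inequality and global identifiability. Hence
`μₙ(θ) / μₙ(θ₀) → 0` for every `θ ≠ θ₀`, and `μₙ(θ₀) → 1`.
-/

open MeasureTheory ProbabilityTheory Filter Finset Topology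
open Real (log exp exp_log exp_sub log_div log_mul log_prod log_rpow rpow_pos_of_pos
  tendsto_exp_atBot)

theorem integral_mul_log_div_nonneg {α : Type*} [MeasurableSpace α] {m : Measure α}
    {f g : α → ℝ} (hf : ∀ x, 0 < f x) (hg : ∀ x, 0 < g x)
    (hf_one : ∫ x, f x ∂m = 1) (hg_one : ∫ x, g x ∂m = 1)
    (hint : Integrable (fun x => f x * log (f x / g x)) m) :
    0 ≤ ∫ x, f x * log (f x / g x) ∂m := by
  have hfi : Integrable f m := .of_integral_ne_zero (by simp [hf_one])
  have hgi : Integrable g m := .of_integral_ne_zero (by simp [hg_one])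
  have hpt : ∀ x, f x - g x ≤ f x * log (f x / g x) := fun x => by
    have h := mul_le_mul_of_nonneg_left
      (Real.one_sub_inv_le_log_of_pos (div_pos (hf x) (hg x))) (hf x).le
    rwa [inv_div, mul_sub, mul_one, mul_div_cancel₀ _ (hf x).ne'] at h
  have := integral_mono (f := fun x => f x - g x) (hfi.sub hgi) hint hpt
  rwa [integral_sub hfi hgi, hf_one, hg_one, sub_self] at this

section WithDensity

variable {Ω α : Type*} [MeasurableSpace Ω] [MeasurableSpace α] {P : Measure Ω} {ν : Measure α}
  {p : α → ℝ} {X : Ω → α}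

theorem integrable_comp_iff_of_map_eq_withDensity (hp : Measurable p) (hp_nonneg : ∀ x, 0 ≤ p x)
    (hX : Measurable X) (hlaw : P.map X = ν.withDensity fun x => ENNReal.ofReal (p x))
    {g : α → ℝ} (hg : Measurable g) :
    Integrable (g ∘ X) P ↔ Integrable (fun x => p x * g x) ν := by
  rw [← integrable_map_measure hg.aestronglyMeasurable hX.aemeasurable, hlaw,
    integrable_withDensity_iff_integrable_smul' hp.ennreal_ofReal
      (.of_forall fun _ => ENNReal.ofReal_lt_top)]
  simp only [ENNReal.toReal_ofReal (hp_nonneg _), smul_eq_mul]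

theorem integral_comp_of_map_eq_withDensity (hp : Measurable p) (hp_nonneg : ∀ x, 0 ≤ p x)
    (hX : Measurable X) (hlaw : P.map X = ν.withDensity fun x => ENNReal.ofReal (p x))
    {g : α → ℝ} (hg : Measurable g) :
    ∫ ω, g (X ω) ∂P = ∫ x, p x * g x ∂ν := by
  rw [← integral_map hX.aemeasurable hg.aestronglyMeasurable, hlaw,
    integral_withDensity_eq_integral_toReal_smul hp.ennreal_ofReal
      (.of_forall fun _ => ENNReal.ofReal_lt_top)]
  simp only [ENNReal.toReal_ofReal (hp_nonneg _), smul_eq_mul]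

theorem strong_law_comp_of_map_eq_withDensity (hp : Measurable p) (hp_nonneg : ∀ x, 0 ≤ p x)
    {ξ : ℕ → Ω → α} (hξ : ∀ i, Measurable (ξ i)) (hindep : iIndepFun ξ P)
    (hlaw : ∀ i, P.map (ξ i) = ν.withDensity fun x => ENNReal.ofReal (p x))
    {g : α → ℝ} (hg : Measurable g) (hint : Integrable (fun x => p x * g x) ν) :
    ∀ᵐ ω ∂P, Tendsto (fun n : ℕ => (∑ j ∈ range n, g (ξ j ω)) / n) atTop
      (𝓝 (∫ x, p x * g x ∂ν)) := by
  have hident : ∀ i, IdentDistrib (ξ i) (ξ 0) P P := fun i =>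
    ⟨(hξ i).aemeasurable, (hξ 0).aemeasurable, by rw [hlaw, hlaw]⟩
  have h := strong_law_ae_real (fun j ω => g (ξ j ω))
    ((integrable_comp_iff_of_map_eq_withDensity hp hp_nonneg (hξ 0) (hlaw 0) hg).2 hint)
    (fun i j hij => (hindep.indepFun hij).comp hg hg) (fun i => (hident i).comp hg)
  rwa [integral_comp_of_map_eq_withDensity hp hp_nonneg (hξ 0) (hlaw 0) hg] at h

theorem strong_law_log_likelihood_ratio (hp : Measurable p) (hp_pos : ∀ x, 0 < p x)
    {q : α → ℝ} (hq : Measurable q) (hq_pos : ∀ x, 0 < q x)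
    {ξ : ℕ → Ω → α} (hξ : ∀ i, Measurable (ξ i)) (hindep : iIndepFun ξ P)
    (hlaw : ∀ i, P.map (ξ i) = ν.withDensity fun x => ENNReal.ofReal (p x))
    (hint : Integrable (fun x => p x * log (p x / q x)) ν) :
    ∀ᵐ ω ∂P, Tendsto (fun n : ℕ => (∑ j ∈ range n, (log (q (ξ j ω)) - log (p (ξ j ω)))) / n)
      atTop (𝓝 (-∫ x, p x * log (p x / q x) ∂ν)) := by
  have hpt : (fun x => p x * (log (q x) - log (p x))) = fun x => -(p x * log (p x / q x)) := by
    ext x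
    rw [log_div (hp_pos x).ne' (hq_pos x).ne']
    ring
  have h := strong_law_comp_of_map_eq_withDensity hp (fun x => (hp_pos x).le) hξ hindep hlaw
    (g := fun x => log (q x) - log (p x)) (hq.log.sub hp.log) (by rw [hpt]; exact hint.neg)
  rwa [hpt, integral_neg] at h

end WithDensity

section Pooling

variable {ι Θ : Type*} [Fintype ι] [Fintype Θ]

noncomputable def bayesUpdate (L m : Θ → ℝ) (θ : Θ) : ℝ :=
  L θ * m θ / ∑ θ', L θ' * m θ'

noncomputable def geometricPool (w : ι → ℝ) (ψ : ι → Θ → ℝ) (θ : Θ) : ℝ :=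
  (∏ k, ψ k θ ^ w k) / ∑ θ', ∏ k, ψ k θ' ^ w k

theorem bayesUpdate_pos {L m : Θ → ℝ} (hL : ∀ θ, 0 < L θ) (hm : ∀ θ, 0 < m θ) (θ : Θ) :
    0 < bayesUpdate L m θ :=
  div_pos (mul_pos (hL θ) (hm θ))
    (sum_pos (fun θ' _ => mul_pos (hL θ') (hm θ')) ⟨θ, mem_univ θ⟩)

theorem log_bayesUpdate_sub {L m : Θ → ℝ} (hL : ∀ θ, 0 < L θ) (hm : ∀ θ, 0 < m θ) (θ θ' : Θ) :
    log (bayesUpdate L m θ) - log (bayesUpdate L m θ') =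
      (log (L θ) - log (L θ')) + (log (m θ) - log (m θ')) := by
  have hZ : ∑ θ'', L θ'' * m θ'' ≠ 0 :=
    (sum_pos (fun θ'' _ => mul_pos (hL θ'') (hm θ'')) ⟨θ, mem_univ θ⟩).ne'
  simp only [bayesUpdate, log_div (mul_pos (hL _) (hm _)).ne' hZ,
    log_mul (hL _).ne' (hm _).ne']
  ring

variable {w : ι → ℝ} {ψ : ι → Θ → ℝ}

theorem geometricPool_pos (hψ : ∀ k θ, 0 < ψ k θ) (θ : Θ) : 0 < geometricPool w ψ θ :=
  div_pos (prod_pos fun k _ => rpow_pos_of_pos (hψ k θ) _)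
    (sum_pos (fun θ' _ => prod_pos fun k _ => rpow_pos_of_pos (hψ k θ') _) ⟨θ, mem_univ θ⟩)

theorem sum_geometricPool [Nonempty Θ] (hψ : ∀ k θ, 0 < ψ k θ) :
    ∑ θ, geometricPool w ψ θ = 1 := by
  simp only [geometricPool, ← sum_div]
  exact div_self (sum_pos (fun θ _ => prod_pos fun k _ => rpow_pos_of_pos (hψ k θ) _)
    univ_nonempty).ne'

theorem log_geometricPool_sub (hψ : ∀ k θ, 0 < ψ k θ) (θ θ' : Θ) :
    log (geometricPool w ψ θ) - log (geometricPool w ψ θ') =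
      ∑ k, w k * (log (ψ k θ) - log (ψ k θ')) := by
  have hP : ∀ θ, 0 < ∏ k, ψ k θ ^ w k := fun θ => prod_pos fun k _ => rpow_pos_of_pos (hψ k θ) _
  have hZ : ∑ θ'', ∏ k, ψ k θ'' ^ w k ≠ 0 := (sum_pos (fun θ'' _ => hP θ'') ⟨θ, mem_univ θ⟩).ne'
  simp only [geometricPool, log_div (hP _).ne' hZ, mul_sub, sum_sub_distrib,
    log_prod (fun k _ => (rpow_pos_of_pos (hψ k _) _).ne'), log_rpow (hψ _ _)]
  ring

theorem log_geometricPool_bayesUpdate_sub (hw : ∑ k, w k = 1) {L : ι → Θ → ℝ}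
    (hL : ∀ k θ, 0 < L k θ) {m : Θ → ℝ} (hm : ∀ θ, 0 < m θ) (θ θ' : Θ) :
    log (geometricPool w (fun k => bayesUpdate (L k) m) θ) -
        log (geometricPool w (fun k => bayesUpdate (L k) m) θ') =
      (log (m θ) - log (m θ')) + ∑ k, w k * (log (L k θ) - log (L k θ')) := by
  rw [log_geometricPool_sub (fun k => bayesUpdate_pos (hL k) hm)]
  simp only [log_bayesUpdate_sub (hL _) hm, mul_add, sum_add_distrib, ← sum_mul, hw, one_mul]
  ring

theorem synchronous_belief_pos_and_log_odds (hw : ∑ k, w k = 1) {L : ι → ℕ → Θ → ℝ}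
    (hL : ∀ k n θ, 0 < L k n θ) {μ : ℕ → Θ → ℝ} (hμ₀ : ∀ θ, 0 < μ 0 θ)
    (hμ : ∀ n, μ (n + 1) = geometricPool w fun k => bayesUpdate (L k (n + 1)) (μ n)) (n : ℕ) :
    (∀ θ, 0 < μ n θ) ∧ ∀ θ θ', log (μ n θ) - log (μ n θ') =
      (log (μ 0 θ) - log (μ 0 θ')) +
        ∑ k, w k * ∑ j ∈ range n, (log (L k (j + 1) θ) - log (L k (j + 1) θ')) := by
  induction n with
  | zero => simpa using hμ₀
  | succ n ih =>
    refine ⟨fun θ => ?_, fun θ θ' => ?_⟩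
    · rw [hμ]
      exact geometricPool_pos (fun k => bayesUpdate_pos (hL k _) ih.1) θ
    · rw [hμ, log_geometricPool_bayesUpdate_sub hw (fun k => hL k _) ih.1, ih.2]
      simp only [sum_range_succ, mul_add, sum_add_distrib]
      ring

end Pooling

theorem tendsto_of_log_sub_tendsto_atBot {Θ : Type*} [Fintype Θ] {p : ℕ → Θ → ℝ} {θ₀ : Θ}
    (hpos : ∀ n θ, 0 < p n θ) (hsum : ∀ n, ∑ θ, p n θ = 1)
    (hodds : ∀ θ ≠ θ₀, Tendsto (fun n => log (p n θ) - log (p n θ₀)) atTop atBot) :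
    Tendsto (fun n => p n θ₀) atTop (𝓝 1) := by
  classical
  have hratio : ∀ θ, Tendsto (fun n => p n θ / p n θ₀) atTop
      (𝓝 (if θ = θ₀ then 1 else 0)) := fun θ => by
    split_ifs with hθ
    · subst hθ
      simp only [div_self (hpos _ _).ne', tendsto_const_nhds]
    · refine (tendsto_exp_atBot.comp (hodds θ hθ)).congr fun n => ?_
      simp [exp_sub, exp_log (hpos n _)]
  have hlim := (tendsto_finsetSum univ fun θ _ => hratio θ).inv₀ (by simp)
  simp only [sum_ite_eq', mem_univ, if_true, inv_one] at hlim
  exact hlim.congr fun n => by rw [← sum_div, hsum, one_div, inv_inv]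

theorem tendsto_atBot_of_tendsto_div_natCast {u : ℕ → ℝ} {ℓ : ℝ}
    (hu : Tendsto (fun n => u n / n) atTop (𝓝 ℓ)) (hℓ : ℓ < 0) : Tendsto u atTop atBot := by
  refine (hu.neg_mul_atTop hℓ tendsto_natCast_atTop_atTop).congr' ?_
  filter_upwards [eventually_ne_atTop 0] with n hn
  field_simp

theorem tendsto_sum_mul_atBot {ι : Type*} [Fintype ι] {w ℓ : ι → ℝ} {S : ι → ℕ → ℝ}
    (hS : ∀ k, Tendsto (fun n => S k n / n) atTop (𝓝 (ℓ k))) (hneg : ∑ k, w k * ℓ k < 0) :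
    Tendsto (fun n => ∑ k, w k * S k n) atTop atBot := by
  refine tendsto_atBot_of_tendsto_div_natCast ?_ hneg
  simp only [sum_div, mul_div_assoc]
  exact tendsto_finsetSum _ fun k _ => (hS k).const_mul (w k)

theorem synchronous_belief_convergence_general
    {K : ℕ}
    {Θ : Type*} [Fintype Θ] (θ₀ : Θ)
    (π : Fin K → ℝ) (hπ : ∀ k, π k ∈ Set.Ioo (0 : ℝ) 1) (hπsum : ∑ k, π k = 1)
    {X : Fin K → Type*} [∀ k, MeasurableSpace (X k)]
    (ν : ∀ k, Measure (X k))
    (f : ∀ k, Θ → X k → ℝ)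
    (hfpos : ∀ k θ x, 0 < f k θ x)
    (hfmeas : ∀ k θ, Measurable (f k θ))
    (hfprob : ∀ k θ, ∫ x, f k θ x ∂ν k = 1)
    (d : Fin K → Θ → ℝ)
    (hdint : ∀ k θ, Integrable (fun x => f k θ₀ x * Real.log (f k θ₀ x / f k θ x)) (ν k))
    (hd : ∀ k θ, d k θ = ∫ x, f k θ₀ x * Real.log (f k θ₀ x / f k θ x) ∂ν k)
    (hglobal : ∀ θ, θ ≠ θ₀ → ∃ k, 0 < d k θ)
    {Ω : Type*} [MeasureSpace Ω]
    (ξ : ∀ k : Fin K, ℕ → Ω → X k)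
    (hξmeas : ∀ k i, Measurable (ξ k i))
    (hξindep : ∀ k, iIndepFun (ξ k) ℙ)
    (hξlaw : ∀ k i, Measure.map (ξ k i) ℙ =
      (ν k).withDensity (fun x => ENNReal.ofReal (f k θ₀ x)))
    (μ₀ : Θ → ℝ) (hμ₀pos : ∀ θ, 0 < μ₀ θ) (hμ₀sum : ∑ θ, μ₀ θ = 1)
    (ψ : Fin K → ℕ → Ω → Θ → ℝ) (μ : ℕ → Ω → Θ → ℝ)
    (hinit : ∀ ω, μ 0 ω = μ₀)
    (hψ : ∀ (k : Fin K) (i : ℕ) (ω : Ω) (θ : Θ), ψ k (i + 1) ω θ =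
      f k θ (ξ k (i + 1) ω) * μ i ω θ /
        ∑ θ', f k θ' (ξ k (i + 1) ω) * μ i ω θ')
    (hμ : ∀ (i : ℕ) (ω : Ω) (θ : Θ), μ (i + 1) ω θ =
      (∏ k, ψ k (i + 1) ω θ ^ π k) / ∑ θ', ∏ k, ψ k (i + 1) ω θ' ^ π k) :
    ∀ᵐ ω ∂ℙ, Tendsto (fun i => μ i ω θ₀) atTop (nhds 1) := by
  have : Nonempty Θ := ⟨θ₀⟩
  have hrec : ∀ ω n, μ (n + 1) ω =
      geometricPool π fun k => bayesUpdate (fun θ => f k θ (ξ k (n + 1) ω)) (μ n ω) :=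
    fun ω n => funext fun θ => by simp only [hμ, hψ, geometricPool, bayesUpdate]
  have hdyn := fun ω => synchronous_belief_pos_and_log_odds (μ := fun n => μ n ω) hπsum
    (fun k n θ => hfpos k θ (ξ k n ω)) (by rw [hinit]; exact hμ₀pos) (hrec ω)
  have hsum : ∀ ω n, ∑ θ, μ n ω θ = 1
    | ω, 0 => by rw [hinit, hμ₀sum]
    | ω, n + 1 => by
      rw [hrec]
      exact sum_geometricPool fun k => bayesUpdate_pos (fun θ => hfpos k θ _) (hdyn ω n).1
  have hslln : ∀ᵐ ω ∂ℙ, ∀ k θ, Tendsto (fun n : ℕ => (∑ j ∈ range n,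
      (log (f k θ (ξ k (j + 1) ω)) - log (f k θ₀ (ξ k (j + 1) ω)))) / n) atTop (𝓝 (-d k θ)) :=
    ae_all_iff.2 fun k => ae_all_iff.2 fun θ => by
      simpa only [hd] using strong_law_log_likelihood_ratio (hfmeas k θ₀) (hfpos k θ₀)
        (hfmeas k θ) (hfpos k θ) (fun j => hξmeas k (j + 1))
        ((hξindep k).precomp (add_left_injective 1)) (fun j => hξlaw k (j + 1)) (hdint k θ)
  filter_upwards [hslln] with ω hω
  refine tendsto_of_log_sub_tendsto_atBot (fun n => (hdyn ω n).1) (hsum ω) fun θ hθ => ?_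
  refine (tendsto_atBot_add_const_left _ _ (tendsto_sum_mul_atBot (fun k => hω k θ) ?_)).congr
    fun n => ((hdyn ω n).2 θ θ₀).symm
  have hd_nonneg : ∀ k, 0 ≤ d k θ := fun k => by
    rw [hd]
    exact integral_mul_log_div_nonneg (hfpos k θ₀) (hfpos k θ) (hfprob k θ₀) (hfprob k θ)
      (hdint k θ)
  obtain ⟨k, hk⟩ := hglobal θ hθ
  simp only [mul_neg, sum_neg_distrib, neg_lt_zero]
  exact sum_pos' (fun k _ => mul_nonneg (hπ k).1.le (hd_nonneg k))
    ⟨k, mem_univ k, mul_pos (hπ k).1 hk⟩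

/-- **Theorem 1 (pre-intervention), synchronous collaboration.**
`K ≥ 2` heterogeneous agents with positive likelihood densities `f k θ` (w.r.t. σ-finite
measures `ν k`), finite KL-informativeness `d k θ`, global identifiability, i.i.d.
observations `ξ k i` distributed according to the true likelihood `f k θ₀ · ν k`, and a
fully supported initial belief run the synchronous federated inference recursion
`ψ_{k,i}(θ) ∝ f_k(ξ_{k,i}|θ) μ_{i-1}(θ)` and `μ_i(θ) ∝ ∏_k ψ_{k,i}(θ)^{π_k}`.
Then the fusion-center belief on the true hypothesis converges to one almost surely. -/
theorem synchronous_belief_convergence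
    {K : ℕ} (hK : 2 ≤ K)
    {Θ : Type*} [Fintype Θ] [Nonempty Θ] (θ₀ : Θ)
    (π : Fin K → ℝ) (hπ : ∀ k, π k ∈ Set.Ioo (0 : ℝ) 1) (hπsum : ∑ k, π k = 1)
    {X : Fin K → Type*} [∀ k, MeasurableSpace (X k)]
    (ν : ∀ k, Measure (X k)) (hν : ∀ k, SigmaFinite (ν k))
    (f : ∀ k, Θ → X k → ℝ)
    (hfpos : ∀ k θ x, 0 < f k θ x)
    (hfmeas : ∀ k θ, Measurable (f k θ))
    (hfprob : ∀ k θ, ∫ x, f k θ x ∂ν k = 1)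
    (d : Fin K → Θ → ℝ)
    (hdint : ∀ k θ, Integrable (fun x => f k θ₀ x * Real.log (f k θ₀ x / f k θ x)) (ν k))
    (hd : ∀ k θ, d k θ = ∫ x, f k θ₀ x * Real.log (f k θ₀ x / f k θ x) ∂ν k)
    (hglobal : ∀ θ, θ ≠ θ₀ → ∃ k, 0 < d k θ)
    {Ω : Type*} [MeasureSpace Ω] [IsProbabilityMeasure (ℙ : Measure Ω)]
    (ξ : ∀ k : Fin K, ℕ → Ω → X k)
    (hξmeas : ∀ k i, Measurable (ξ k i))
    (hξindep : ∀ k, iIndepFun (ξ k) ℙ)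
    (hξlaw : ∀ k i, Measure.map (ξ k i) ℙ =
      (ν k).withDensity (fun x => ENNReal.ofReal (f k θ₀ x)))
    (μ₀ : Θ → ℝ) (hμ₀pos : ∀ θ, 0 < μ₀ θ) (hμ₀sum : ∑ θ, μ₀ θ = 1)
    (ψ : Fin K → ℕ → Ω → Θ → ℝ) (μ : ℕ → Ω → Θ → ℝ)
    (hinit : ∀ ω, μ 0 ω = μ₀)
    (hψ : ∀ (k : Fin K) (i : ℕ) (ω : Ω) (θ : Θ), ψ k (i + 1) ω θ =
      f k θ (ξ k (i + 1) ω) * μ i ω θ /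
        ∑ θ', f k θ' (ξ k (i + 1) ω) * μ i ω θ')
    (hμ : ∀ (i : ℕ) (ω : Ω) (θ : Θ), μ (i + 1) ω θ =
      (∏ k, ψ k (i + 1) ω θ ^ π k) / ∑ θ', ∏ k, ψ k (i + 1) ω θ' ^ π k) :
    ∀ᵐ ω ∂ℙ, Tendsto (fun i => μ i ω θ₀) atTop (nhds 1) :=
  synchronous_belief_convergence_general θ₀ π hπ hπsum ν f hfpos hfmeas hfprob d hdint hd hglobal ξ
    hξmeas hξindep hξlaw μ₀ hμ₀pos hμ₀sum ψ μ hinit hψ hμ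
end

section
/- Let a = (π_1 p_1, …, π_K p_K)ᵀ, p = (p_1, …, p_K)ᵀ, A = diag(a), P̄ = diag(1-p_1, …, 1-p_K), s_k = p_k ∑_{ℓ≠k} π_ℓ (1-p_ℓ), s = (s_1,…,s_K)ᵀ, σ = ∑_{k=1}^K π_k (1-p_k). Define the (K+1)×(K+1) matrix R with upper-left K×K block P̄A + P̄ + p aᵀ, upper-right column s, lower-left row aᵀ and lower-right entry σ, and the (K+1)×K matrix U whose first K rows are P̄A + P̄ + p aᵀ and whose last row is aᵀ. Let d ∈ ℝ^K have nonnegative entries with d_{k*} > 0 for at least one index k*. Then: (i) every entry of R is strictly positive; (ii) every row of R sums to 1; and (iii) for any initial vector Λ̄_0 ∈ ℝ^{K+1}, the recursion Λ̄_i = R Λ̄_{i-1} + U d satisfies: there exists a constant γ > 0 such that every coordinate of (1/i) Λ̄_i converges to γ as i → ∞; in particular every coordinate of Λ̄_i tends to +∞. -/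
/-!
A row-stochastic matrix `R` with smallest entry `ε > 0` does not decrease `min x`, does not
increase `max x`, and shrinks the spread `max x - min x` by the factor `1 - ε`, because every row
puts weight at least `ε` on a minimizing coordinate. Hence `R ^ t *ᵥ x` converges to a constant
vector, whose value is at least `min x`. Unrolling the recursion gives
`Λ i = R ^ i *ᵥ Λ 0 + ∑ t < i, R ^ t *ᵥ c` with `c = U *ᵥ d > 0`: the first term converges, and the
second, divided by `i`, is a Cesàro mean of vectors converging to a constant `γ ≥ min c > 0`.
-/

open Finset Filter Matrix Topology

namespace Matrix

variable {ι : Type*} [Fintype ι]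

lemma mulVec_pos {m : Type*} {U : Matrix m ι ℝ} (hU : ∀ i k, 0 < U i k) {d : ι → ℝ}
    (hd : ∀ k, 0 ≤ d k) (hd' : ∃ k, 0 < d k) (i : m) : 0 < (U *ᵥ d) i := by
  obtain ⟨k, hk⟩ := hd'
  exact sum_pos' (fun j _ ↦ mul_nonneg (hU i j).le (hd j))
    ⟨k, mem_univ k, mul_pos (hU i k) hk⟩

variable [DecidableEq ι]

lemma pow_mulVec_add_sum_of_eq_mulVec_add {α : Type*} [Semiring α] {R : Matrix ι ι α}
    {c : ι → α} {Λ : ℕ → ι → α} (hΛ : ∀ i, Λ (i + 1) = R *ᵥ Λ i + c) (i : ℕ) :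
    Λ i = R ^ i *ᵥ Λ 0 + ∑ t ∈ range i, R ^ t *ᵥ c := by
  induction i with
  | zero => simp
  | succ i ih =>
    rw [hΛ, ih, mulVec_add, mulVec_sum, sum_range_succ', pow_zero, one_mulVec, pow_succ',
      ← mulVec_mulVec]
    simp only [pow_succ', ← mulVec_mulVec, add_assoc]

variable [Nonempty ι] {R : Matrix ι ι ℝ}

lemma inf'_le_mulVec_apply (hR : R ∈ rowStochastic ℝ ι) (x : ι → ℝ) (i : ι) :
    univ.inf' univ_nonempty x ≤ (R *ᵥ x) i :=
  calc univ.inf' univ_nonempty x = ∑ j, R i j * univ.inf' univ_nonempty x := by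
        rw [← sum_mul, sum_row_of_mem_rowStochastic hR, one_mul]
    _ ≤ ∑ j, R i j * x j :=
        sum_le_sum fun j _ ↦ mul_le_mul_of_nonneg_left (inf'_le _ (mem_univ j)) (hR.1 i j)

lemma mulVec_apply_le_sup' (hR : R ∈ rowStochastic ℝ ι) (x : ι → ℝ) (i : ι) :
    (R *ᵥ x) i ≤ univ.sup' univ_nonempty x :=
  calc ∑ j, R i j * x j ≤ ∑ j, R i j * univ.sup' univ_nonempty x :=
        sum_le_sum fun j _ ↦ mul_le_mul_of_nonneg_left (le_sup' _ (mem_univ j)) (hR.1 i j)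
    _ = univ.sup' univ_nonempty x := by
        rw [← sum_mul, sum_row_of_mem_rowStochastic hR, one_mul]

lemma mulVec_apply_le_of_le_apply (hR : R ∈ rowStochastic ℝ ι) {ε : ℝ} (hε : ∀ i j, ε ≤ R i j)
    (x : ι → ℝ) (i : ι) :
    (R *ᵥ x) i ≤ univ.sup' univ_nonempty x
      - ε * (univ.sup' univ_nonempty x - univ.inf' univ_nonempty x) := by
  obtain ⟨j₀, -, hj₀⟩ := exists_mem_eq_inf' univ_nonempty x
  set M := univ.sup' univ_nonempty x
  have hM : ∀ j, 0 ≤ M - x j := fun j ↦ sub_nonneg.2 (le_sup' x (mem_univ j))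
  have hsum : ∑ j, R i j * (M - x j) = M - (R *ᵥ x) i := by
    simp only [mul_sub, sum_sub_distrib, ← sum_mul, sum_row_of_mem_rowStochastic hR, one_mul]
    rfl
  have hj₀_le : R i j₀ * (M - x j₀) ≤ ∑ j, R i j * (M - x j) :=
    single_le_sum (f := fun j ↦ R i j * (M - x j)) (fun j _ ↦ mul_nonneg (hR.1 i j) (hM j))
      (mem_univ j₀)
  rw [hj₀]
  nlinarith [hε i j₀, hM j₀]

lemma sup'_sub_inf'_mulVec_le (hR : R ∈ rowStochastic ℝ ι) {ε : ℝ} (hε : ∀ i j, ε ≤ R i j)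
    (x : ι → ℝ) :
    univ.sup' univ_nonempty (R *ᵥ x) - univ.inf' univ_nonempty (R *ᵥ x)
      ≤ (1 - ε) * (univ.sup' univ_nonempty x - univ.inf' univ_nonempty x) := by
  have hsup := sup'_le univ_nonempty _ fun i _ ↦ mulVec_apply_le_of_le_apply hR hε x i
  have hinf := le_inf' univ_nonempty _ fun i _ ↦ inf'_le_mulVec_apply hR x i
  linarith

theorem exists_tendsto_pow_mulVec (hR : R ∈ rowStochastic ℝ ι) (hpos : ∀ i j, 0 < R i j)
    (x : ι → ℝ) :
    ∃ γ, univ.inf' univ_nonempty x ≤ γ ∧ ∀ j, Tendsto (fun t ↦ (R ^ t *ᵥ x) j) atTop (𝓝 γ) := by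
  obtain ⟨⟨i₀, j₀⟩, hmin⟩ := Finite.exists_min fun q : ι × ι ↦ R q.1 q.2
  set ε := R i₀ j₀
  have hε : 0 < ε := hpos i₀ j₀
  have hε1 : ε ≤ 1 := le_one_of_mem_rowStochastic hR
  set m : ℕ → ℝ := fun t ↦ univ.inf' univ_nonempty (R ^ t *ᵥ x)
  set M : ℕ → ℝ := fun t ↦ univ.sup' univ_nonempty (R ^ t *ᵥ x)
  have hstep (t : ℕ) : R ^ (t + 1) *ᵥ x = R *ᵥ (R ^ t *ᵥ x) := by
    rw [pow_succ', mulVec_mulVec]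
  have hm : Monotone m := monotone_nat_of_le_succ fun t ↦ by
    simp only [m, hstep]
    exact le_inf' _ _ fun i _ ↦ inf'_le_mulVec_apply hR _ i
  have hM : Antitone M := antitone_nat_of_succ_le fun t ↦ by
    simp only [M, hstep]
    exact sup'_le _ _ fun i _ ↦ mulVec_apply_le_sup' hR _ i
  have hmM (t : ℕ) : m t ≤ M t := (inf'_le _ (mem_univ j₀)).trans (le_sup' _ (mem_univ j₀))
  have hgap (t : ℕ) : M t - m t ≤ (1 - ε) ^ t * (M 0 - m 0) := by
    induction t with
    | zero => simp
    | succ t ih =>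
      calc M (t + 1) - m (t + 1) ≤ (1 - ε) * (M t - m t) := by
            simp only [M, m, hstep]
            exact sup'_sub_inf'_mulVec_le hR (fun i j ↦ hmin (i, j)) _
        _ ≤ (1 - ε) * ((1 - ε) ^ t * (M 0 - m 0)) := by gcongr
        _ = (1 - ε) ^ (t + 1) * (M 0 - m 0) := by ring
  have hgap_lim : Tendsto (fun t ↦ M t - m t) atTop (𝓝 0) := by
    refine squeeze_zero (fun t ↦ sub_nonneg.2 (hmM t)) hgap ?_
    simpa using (tendsto_pow_atTop_nhds_zero_of_lt_one (by linarith) (by linarith)).mul_const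
      (M 0 - m 0)
  have hm_lim : Tendsto m atTop (𝓝 (⨆ t, m t)) :=
    tendsto_atTop_ciSup hm ⟨M 0, by rintro _ ⟨t, rfl⟩; exact (hmM t).trans (hM t.zero_le)⟩
  have hM_lim : Tendsto M atTop (𝓝 (⨆ t, m t)) := by simpa using hm_lim.add hgap_lim
  refine ⟨⨆ t, m t, ?_, fun j ↦ tendsto_of_tendsto_of_tendsto_of_le_of_le hm_lim hM_lim
    (fun t ↦ inf'_le _ (mem_univ j)) (fun t ↦ le_sup' _ (mem_univ j))⟩
  simpa [m] using hm.ge_of_tendsto hm_lim 0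

theorem exists_tendsto_div_natCast_of_eq_mulVec_add (hR : R ∈ rowStochastic ℝ ι)
    (hpos : ∀ i j, 0 < R i j) {c : ι → ℝ} (hc : ∀ j, 0 < c j) {Λ : ℕ → ι → ℝ}
    (hΛ : ∀ i, Λ (i + 1) = R *ᵥ Λ i + c) :
    ∃ γ, 0 < γ ∧ ∀ j, Tendsto (fun i : ℕ ↦ Λ i j / i) atTop (𝓝 γ) := by
  obtain ⟨γ, hcγ, hc_lim⟩ := exists_tendsto_pow_mulVec hR hpos c
  obtain ⟨γ₀, -, h₀_lim⟩ := exists_tendsto_pow_mulVec hR hpos (Λ 0)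
  refine ⟨γ, ((lt_inf'_iff _).2 fun j _ ↦ hc j).trans_le hcγ, fun j ↦ ?_⟩
  have hsplit (i : ℕ) : Λ i j / i
      = (R ^ i *ᵥ Λ 0) j / i + (i : ℝ)⁻¹ * ∑ t ∈ range i, (R ^ t *ᵥ c) j := by
    rw [pow_mulVec_add_sum_of_eq_mulVec_add hΛ, Pi.add_apply, Finset.sum_apply, add_div,
      inv_mul_eq_div]
  simpa [hsplit] using
    ((h₀_lim j).div_atTop tendsto_natCast_atTop_atTop).add (hc_lim j).cesaro

end Matrix

lemma tendsto_atTop_of_tendsto_div_natCast {f : ℕ → ℝ} {γ : ℝ} (hγ : 0 < γ)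
    (hf : Tendsto (fun i : ℕ ↦ f i / i) atTop (𝓝 γ)) : Tendsto f atTop atTop :=
  (hf.pos_mul_atTop hγ tendsto_natCast_atTop_atTop).congr' <|
    (eventually_ne_atTop 0).mono fun _ hi ↦ div_mul_cancel₀ _ (Nat.cast_ne_zero.2 hi)

section SymmetricProtocol

variable {K : Type*} {π p : K → ℝ}

lemma sum_mul_one_sub_pos (hπ : ∀ k, 0 < π k) (hp : ∀ k, p k < 1) {s : Finset K}
    (hs : s.Nonempty) : 0 < ∑ l ∈ s, π l * (1 - p l) :=
  sum_pos (fun l _ ↦ mul_pos (hπ l) (sub_pos.2 (hp l))) hs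

lemma agent_entry_pos [DecidableEq K] (hπ : ∀ k, 0 < π k) (hp : ∀ k, p k ∈ Set.Ioo (0 : ℝ) 1)
    (j k : K) :
    0 < (if j = k then (1 - p j) * (π j * p j) + (1 - p j) else 0) + p j * (π k * p k) := by
  have hjk : 0 < p j * (π k * p k) := mul_pos (hp j).1 (mul_pos (hπ k) (hp k).1)
  have hj : 0 < 1 - p j := sub_pos.2 (hp j).2
  split_ifs
  · nlinarith [mul_pos hj (mul_pos (hπ j) (hp j).1)]
  · simpa using hjk

variable [Fintype K]

lemma sum_mul_one_sub_eq (hπsum : ∑ k, π k = 1) :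
    ∑ k, π k * (1 - p k) = 1 - ∑ k, π k * p k := by
  simp only [mul_one_sub, sum_sub_distrib, hπsum]

lemma center_row_sum (hπsum : ∑ k, π k = 1) :
    ∑ k, π k * p k + ∑ k, π k * (1 - p k) = 1 := by
  rw [sum_mul_one_sub_eq hπsum]
  ring

lemma agent_row_sum [DecidableEq K] (hπsum : ∑ k, π k = 1) (j : K) :
    ∑ k, ((if j = k then (1 - p j) * (π j * p j) + (1 - p j) else 0) + p j * (π k * p k))
      + p j * ∑ l ∈ univ.erase j, π l * (1 - p l) = 1 := by
  rw [sum_add_distrib, sum_ite_eq, if_pos (mem_univ j), ← mul_sum,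
    sum_erase_eq_sub (mem_univ j), sum_mul_one_sub_eq hπsum]
  ring

end SymmetricProtocol

/-- **Pre-intervention dynamics of the expected log-belief ratios in the symmetric
asynchronous protocol.**  Agents are indexed by `Fin (n+1)` (so `K = n + 1 ≥ 2`), and the
extended index set `Fin (n+2)` lists the `K` agents (via `Fin.castSucc`) followed by the
fusion center (`Fin.last`).  With `a = (π_k p_k)_k`, `s_k = p_k ∑_{ℓ≠k} π_ℓ(1-p_ℓ)`,
`σ = ∑_k π_k (1-p_k)`, the matrix `R` has upper-left block `P̄A + P̄ + p aᵀ`, upper-right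
column `s`, lower-left row `aᵀ` and lower-right entry `σ`, and `U` consists of the first
`K` rows `P̄A + P̄ + p aᵀ` and last row `aᵀ`.  If `d ≥ 0` has a strictly positive entry,
then: (i) every entry of `R` is strictly positive; (ii) every row of `R` sums to `1`;
(iii) for every solution of `Λ_i = R Λ_{i-1} + U d` there is a constant `γ > 0` such that
every coordinate of `(1/i) Λ_i` tends to `γ`; in particular every coordinate of `Λ_i`
tends to `+∞`. -/
theorem symmetric_preintervention_recursion
    {n : ℕ} (hn : 1 ≤ n)
    (π p : Fin (n + 1) → ℝ)
    (hπ : ∀ k, π k ∈ Set.Ioo (0 : ℝ) 1) (hπsum : ∑ k, π k = 1)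
    (hp : ∀ k, p k ∈ Set.Ioo (0 : ℝ) 1)
    (d : Fin (n + 1) → ℝ) (hd : ∀ k, 0 ≤ d k) (hd' : ∃ k, 0 < d k)
    (R : Matrix (Fin (n + 2)) (Fin (n + 2)) ℝ)
    (U : Matrix (Fin (n + 2)) (Fin (n + 1)) ℝ)
    (hR11 : ∀ j k : Fin (n + 1), R j.castSucc k.castSucc =
      (if j = k then (1 - p j) * (π j * p j) + (1 - p j) else 0) + p j * (π k * p k))
    (hR12 : ∀ j : Fin (n + 1), R j.castSucc (Fin.last (n + 1)) =
      p j * ∑ l ∈ univ.erase j, π l * (1 - p l))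
    (hR21 : ∀ k : Fin (n + 1), R (Fin.last (n + 1)) k.castSucc = π k * p k)
    (hR22 : R (Fin.last (n + 1)) (Fin.last (n + 1)) = ∑ k, π k * (1 - p k))
    (hU1 : ∀ j k : Fin (n + 1), U j.castSucc k =
      (if j = k then (1 - p j) * (π j * p j) + (1 - p j) else 0) + p j * (π k * p k))
    (hU2 : ∀ k : Fin (n + 1), U (Fin.last (n + 1)) k = π k * p k) :
    (∀ i j, 0 < R i j) ∧
    (∀ i, ∑ j, R i j = 1) ∧
    (∀ Λ : ℕ → Fin (n + 2) → ℝ,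
      (∀ i : ℕ, Λ (i + 1) = R.mulVec (Λ i) + U.mulVec d) →
      ∃ γ : ℝ, 0 < γ ∧
        (∀ j, Tendsto (fun i : ℕ => Λ i j / (i : ℝ)) atTop (nhds γ)) ∧
        (∀ j, Tendsto (fun i : ℕ => Λ i j) atTop atTop)) := by
  have hπ₀ (k : Fin (n + 1)) : 0 < π k := (hπ k).1
  have hp₁ (k : Fin (n + 1)) : p k < 1 := (hp k).2
  have ha (k : Fin (n + 1)) : 0 < π k * p k := mul_pos (hπ₀ k) (hp k).1
  have : Nontrivial (Fin (n + 1)) := Fin.nontrivial_iff_two_le.2 (by omega)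
  have hRpos : ∀ i j, 0 < R i j := by
    intro i j
    induction i using Fin.lastCases <;> induction j using Fin.lastCases
    · rw [hR22]; exact sum_mul_one_sub_pos hπ₀ hp₁ univ_nonempty
    · rw [hR21]; exact ha _
    · rw [hR12]
      exact mul_pos (hp _).1 (sum_mul_one_sub_pos hπ₀ hp₁ univ_nontrivial.erase_nonempty)
    · rw [hR11]; exact agent_entry_pos hπ₀ hp _ _
  have hrow : ∀ i, ∑ j, R i j = 1 := by
    intro i
    induction i using Fin.lastCases <;> rw [Fin.sum_univ_castSucc]
    · simp only [hR21, hR22]; exact center_row_sum hπsum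
    · simp only [hR11, hR12]; exact agent_row_sum hπsum _
  have hUpos : ∀ i k, 0 < U i k := by
    intro i k
    induction i using Fin.lastCases
    · rw [hU2]; exact ha k
    · rw [hU1]; exact agent_entry_pos hπ₀ hp _ _
  refine ⟨hRpos, hrow, fun Λ hΛ ↦ ?_⟩
  obtain ⟨γ, hγ, hlim⟩ := exists_tendsto_div_natCast_of_eq_mulVec_add
    (mem_rowStochastic_iff_sum.2 ⟨fun i j ↦ (hRpos i j).le, hrow⟩) hRpos
    (mulVec_pos hUpos hd hd') hΛ
  exact ⟨γ, hγ, hlim, fun j ↦ tendsto_atTop_of_tendsto_div_natCast hγ (hlim j)⟩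
end

section
/- Consider synchronous federated inference where agent m is intervened upon and its intermediate belief is fixed at a pmf μ_m: for i ≥ 1, μ̃_i(θ) ∝ μ_m(θ)^{π_m} ∏_{k≠m} ( f_k(ξ_{k,i}|θ) μ̃_{i-1}(θ) / ∑_{θ'} f_k(ξ_{k,i}|θ') μ̃_{i-1}(θ') )^{π_k} (normalized over θ). Then for every θ ≠ θ°, the expected log-belief ratio λ̃_i(θ) = E[ log( μ̃_i(θ°)/μ̃_i(θ) ) ] converges as i → ∞ to λ̃_∞(θ) = (1/π_m) ∑_{k≠m} π_k d_k(θ) + log( μ_m(θ°)/μ_m(θ) ). Consequently the causal impact of agent m equals C_m = 1 − 1 / ( 1 + ∑_{θ≠θ°} ( μ_m(θ)/μ_m(θ°) ) · exp( −(1/π_m) ∑_{k≠m} π_k d_k(θ) ) ). -/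
open MeasureTheory ProbabilityTheory Filter Finset

/-! Both normalizations cancel in a belief ratio, so `ℓᵢ = log (μ̃ᵢ(θ°) / μ̃ᵢ(θ))` satisfies
`ℓᵢ₊₁ = π_m log (μ_m(θ°) / μ_m(θ)) + ∑_{k≠m} π_k (LLR_{k,i+1} + ℓᵢ)`. In expectation each
log-likelihood ratio contributes `d_k(θ)` and `∑_{k≠m} π_k = 1 - π_m`, so `E ℓᵢ` follows an affine
recursion with contraction factor `1 - π_m ∈ (0, 1)`, whose fixed point is `λ̃_∞(θ)`. -/

section Pooling

variable {Θ ι : Type*}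

lemma log_rpow_mul_prod_rpow_div {s : Finset ι} {p : ℝ} {q : ι → ℝ} {μ : Θ → ℝ}
    {ψ : ι → Θ → ℝ} (hμ : ∀ θ, 0 < μ θ) (hψ : ∀ k ∈ s, ∀ θ, 0 < ψ k θ) (a b : Θ) :
    Real.log ((μ a ^ p * ∏ k ∈ s, ψ k a ^ q k) / (μ b ^ p * ∏ k ∈ s, ψ k b ^ q k)) =
      p * Real.log (μ a / μ b) + ∑ k ∈ s, q k * Real.log (ψ k a / ψ k b) := by
  have hμab := div_pos (hμ a) (hμ b)
  have hψab : ∀ k ∈ s, 0 < ψ k a / ψ k b := fun k hk => div_pos (hψ k hk a) (hψ k hk b)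
  have hsplit : (μ a ^ p * ∏ k ∈ s, ψ k a ^ q k) / (μ b ^ p * ∏ k ∈ s, ψ k b ^ q k) =
      (μ a / μ b) ^ p * ∏ k ∈ s, (ψ k a / ψ k b) ^ q k := by
    rw [mul_div_mul_comm, ← prod_div_distrib, Real.div_rpow (hμ a).le (hμ b).le]
    exact congrArg _ (prod_congr rfl fun k hk =>
      (Real.div_rpow (hψ k hk a).le (hψ k hk b).le _).symm)
  rw [hsplit, Real.log_mul (Real.rpow_pos_of_pos hμab p).ne'
      (prod_pos fun k hk => Real.rpow_pos_of_pos (hψab k hk) (q k)).ne',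
    Real.log_rpow hμab, Real.log_prod fun k hk => (Real.rpow_pos_of_pos (hψab k hk) (q k)).ne']
  exact congrArg _ (sum_congr rfl fun k hk => Real.log_rpow (hψab k hk) _)

variable [Fintype Θ]

noncomputable def normalizeWeights (w : Θ → ℝ) (θ : Θ) : ℝ := w θ / ∑ θ', w θ'

noncomputable def pooledBayesUpdate (s : Finset ι) (p : ℝ) (q : ι → ℝ) (μ : Θ → ℝ)
    (L : ι → Θ → ℝ) (prior : Θ → ℝ) : Θ → ℝ :=
  normalizeWeights fun θ =>
    μ θ ^ p * ∏ k ∈ s, normalizeWeights (fun θ' => L k θ' * prior θ') θ ^ q k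

variable [Nonempty Θ]

lemma normalizeWeights_pos {w : Θ → ℝ} (hw : ∀ θ, 0 < w θ) (θ : Θ) :
    0 < normalizeWeights w θ :=
  div_pos (hw θ) (sum_pos (fun t _ => hw t) univ_nonempty)

lemma normalizeWeights_div_normalizeWeights {w : Θ → ℝ} (hw : ∀ θ, 0 < w θ) (a b : Θ) :
    normalizeWeights w a / normalizeWeights w b = w a / w b :=
  div_div_div_cancel_right₀ (sum_pos (fun t _ => hw t) univ_nonempty).ne' _ _

variable {s : Finset ι} {p : ℝ} {q : ι → ℝ} {μ prior : Θ → ℝ} {L : ι → Θ → ℝ}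

lemma pooledBayesUpdate_pos (hμ : ∀ θ, 0 < μ θ) (hprior : ∀ θ, 0 < prior θ)
    (hL : ∀ k ∈ s, ∀ θ, 0 < L k θ) (θ : Θ) : 0 < pooledBayesUpdate s p q μ L prior θ :=
  normalizeWeights_pos (fun θ => mul_pos (Real.rpow_pos_of_pos (hμ θ) p)
    (prod_pos fun k hk => Real.rpow_pos_of_pos
      (normalizeWeights_pos (fun θ => mul_pos (hL k hk θ) (hprior θ)) θ) _)) θ

lemma log_pooledBayesUpdate_div (hμ : ∀ θ, 0 < μ θ) (hprior : ∀ θ, 0 < prior θ)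
    (hL : ∀ k ∈ s, ∀ θ, 0 < L k θ) (a b : Θ) :
    Real.log (pooledBayesUpdate s p q μ L prior a / pooledBayesUpdate s p q μ L prior b) =
      p * Real.log (μ a / μ b) +
        ∑ k ∈ s, q k * (Real.log (L k a / L k b) + Real.log (prior a / prior b)) := by
  have hLprior : ∀ k ∈ s, ∀ θ, 0 < L k θ * prior θ :=
    fun k hk θ => mul_pos (hL k hk θ) (hprior θ)
  have hψ : ∀ k ∈ s, ∀ θ, 0 < normalizeWeights (fun θ' => L k θ' * prior θ') θ :=
    fun k hk => normalizeWeights_pos (hLprior k hk)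
  rw [pooledBayesUpdate, normalizeWeights_div_normalizeWeights fun θ =>
      mul_pos (Real.rpow_pos_of_pos (hμ θ) p)
        (prod_pos fun k hk => Real.rpow_pos_of_pos (hψ k hk θ) _),
    log_rpow_mul_prod_rpow_div hμ hψ]
  refine congrArg _ (sum_congr rfl fun k hk => ?_)
  rw [normalizeWeights_div_normalizeWeights (hLprior k hk), mul_div_mul_comm,
    Real.log_mul (div_pos (hL k hk a) (hL k hk b)).ne' (div_pos (hprior a) (hprior b)).ne']

end Pooling

lemma tendsto_of_affine_recurrence {x : ℕ → ℝ} {c r : ℝ} (hr : |r| < 1)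
    (hx : ∀ n, x (n + 1) = c + r * x n) : Tendsto x atTop (nhds (c / (1 - r))) := by
  have hr1 : 1 - r ≠ 0 := by linarith [le_abs_self r]
  have hform : ∀ n, x n = c / (1 - r) + r ^ n * (x 0 - c / (1 - r)) := fun n => by
    induction n with
    | zero => ring
    | succ n ih => rw [hx, ih]; field_simp; ring
  rw [funext hform]
  simpa using tendsto_const_nhds.add
    ((tendsto_pow_atTop_nhds_zero_of_abs_lt_one hr).mul_const (x 0 - c / (1 - r)))

lemma tendsto_integral_of_pooled_recurrence {Ω ι : Type*} [MeasurableSpace Ω]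
    {P : Measure Ω} [IsProbabilityMeasure P] {s : Finset ι} {p a : ℝ} {q d : ι → ℝ}
    (hp : 0 < p) (hp2 : p < 2) (hq : ∑ k ∈ s, q k = 1 - p)
    {ℓ : ℕ → Ω → ℝ} {g : ι → ℕ → Ω → ℝ} (hℓ : Integrable (ℓ 0) P)
    (hg : ∀ k ∈ s, ∀ i, Integrable (g k i) P) (hgd : ∀ k ∈ s, ∀ i, ∫ ω, g k i ω ∂P = d k)
    (hstep : ∀ i ω, ℓ (i + 1) ω = p * a + ∑ k ∈ s, q k * (g k (i + 1) ω + ℓ i ω)) :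
    Tendsto (fun i => ∫ ω, ℓ i ω ∂P) atTop (nhds ((1 / p) * ∑ k ∈ s, q k * d k + a)) := by
  have hint : ∀ i, Integrable (ℓ i) P := fun i => by
    induction i with
    | zero => exact hℓ
    | succ i ih =>
      rw [funext (hstep i)]
      exact (integrable_const _).add
        (integrable_finsetSum _ fun k hk => ((hg k hk _).add ih).const_mul (q k))
  have hrec : ∀ i, ∫ ω, ℓ (i + 1) ω ∂P =
      (p * a + ∑ k ∈ s, q k * d k) + (1 - p) * ∫ ω, ℓ i ω ∂P := fun i => by
    have hterm : ∀ k ∈ s, Integrable (fun ω => q k * (g k (i + 1) ω + ℓ i ω)) P :=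
      fun k hk => ((hg k hk _).add (hint i)).const_mul (q k)
    rw [funext (hstep i), integral_add (integrable_const _) (integrable_finsetSum _ hterm),
      integral_const, integral_finsetSum _ hterm, ← hq, sum_mul, add_assoc, ← sum_add_distrib]
    simp only [probReal_univ, one_smul]
    refine congrArg _ (sum_congr rfl fun k hk => ?_)
    rw [integral_const_mul, integral_add (hg k hk _) (hint i), hgd k hk, mul_add]
  convert tendsto_of_affine_recurrence (x := fun i => ∫ ω, ℓ i ω ∂P) (r := 1 - p)
    (abs_sub_lt_iff.mpr ⟨by linarith, by linarith⟩) hrec using 2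
  field_simp [hp.ne']
  ring

lemma integral_comp_eq_integral_density_mul {Ω X : Type*} [MeasurableSpace Ω]
    [MeasurableSpace X] {P : Measure Ω} {ν : Measure X} {ξ : Ω → X} {ρ h : X → ℝ}
    (hξ : Measurable ξ) (hρ : Measurable ρ) (hρ_nonneg : ∀ x, 0 ≤ ρ x) (hh : Measurable h)
    (hlaw : P.map ξ = ν.withDensity fun x => ENNReal.ofReal (ρ x)) :
    ∫ ω, h (ξ ω) ∂P = ∫ x, ρ x * h x ∂ν := by
  rw [← integral_map hξ.aemeasurable hh.aestronglyMeasurable, hlaw,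
    integral_withDensity_eq_integral_toReal_smul hρ.ennreal_ofReal
      (ae_of_all _ fun _ => ENNReal.ofReal_lt_top)]
  simp only [ENNReal.toReal_ofReal (hρ_nonneg _), smul_eq_mul]

lemma exp_neg_add_log_div {c x y : ℝ} (hx : 0 < x) (hy : 0 < y) :
    Real.exp (-(c + Real.log (x / y))) = y / x * Real.exp (-c) := by
  rw [neg_add, Real.exp_add, ← Real.log_inv, inv_div, Real.exp_log (div_pos hy hx), mul_comm]

theorem synchronous_intervention_causal_impact_general
    {K : ℕ}
    {Θ : Type*} [Fintype Θ] [DecidableEq Θ] (θ₀ : Θ)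
    (π : Fin K → ℝ) (hπ : ∀ k, π k ∈ Set.Ioo (0 : ℝ) 1) (hπsum : ∑ k, π k = 1)
    (m : Fin K)
    {X : Fin K → Type*} [∀ k, MeasurableSpace (X k)]
    (ν : ∀ k, Measure (X k))
    (f : ∀ k, Θ → X k → ℝ)
    (hfpos : ∀ k θ x, 0 < f k θ x)
    (hfmeas : ∀ k θ, Measurable (f k θ))
    (d : Fin K → Θ → ℝ)
    (hd : ∀ k θ, d k θ = ∫ x, f k θ₀ x * Real.log (f k θ₀ x / f k θ x) ∂ν k)
    {Ω : Type*} [MeasureSpace Ω] [IsProbabilityMeasure (ℙ : Measure Ω)]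
    (ξ : ∀ k : Fin K, ℕ → Ω → X k)
    (hξmeas : ∀ k i, Measurable (ξ k i))
    (hξlaw : ∀ k, k ≠ m → ∀ i, Measure.map (ξ k i) ℙ =
      (ν k).withDensity (fun x => ENNReal.ofReal (f k θ₀ x)))
    (hllrint : ∀ k, k ≠ m → ∀ (i : ℕ) (θ : Θ),
      Integrable (fun ω => Real.log (f k θ₀ (ξ k i ω) / f k θ (ξ k i ω))) ℙ)
    (μm : Θ → ℝ) (hμmpos : ∀ θ, 0 < μm θ)
    (μ₀ : Θ → ℝ) (hμ₀pos : ∀ θ, 0 < μ₀ θ)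
    (μt : ℕ → Ω → Θ → ℝ)
    (hinit : ∀ ω, μt 0 ω = μ₀)
    (hμt : ∀ (i : ℕ) (ω : Ω) (θ : Θ), μt (i + 1) ω θ =
      (μm θ ^ π m * ∏ k ∈ univ.erase m,
          (f k θ (ξ k (i + 1) ω) * μt i ω θ /
            ∑ θ', f k θ' (ξ k (i + 1) ω) * μt i ω θ') ^ π k) /
        ∑ θ'', μm θ'' ^ π m * ∏ k ∈ univ.erase m,
          (f k θ'' (ξ k (i + 1) ω) * μt i ω θ'' /
            ∑ θ', f k θ' (ξ k (i + 1) ω) * μt i ω θ') ^ π k) :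
    (∀ θ, θ ≠ θ₀ →
      Tendsto (fun i => ∫ ω, Real.log (μt i ω θ₀ / μt i ω θ) ∂ℙ) atTop
        (nhds ((1 / π m) * ∑ k ∈ univ.erase m, π k * d k θ +
          Real.log (μm θ₀ / μm θ)))) ∧
    1 - 1 / (1 + ∑ θ ∈ univ.erase θ₀,
        Real.exp (-((1 / π m) * ∑ k ∈ univ.erase m, π k * d k θ +
          Real.log (μm θ₀ / μm θ)))) =
      1 - 1 / (1 + ∑ θ ∈ univ.erase θ₀, (μm θ / μm θ₀) *
        Real.exp (-(1 / π m) * ∑ k ∈ univ.erase m, π k * d k θ)) := by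
  have : Nonempty Θ := ⟨θ₀⟩
  have hupdate : ∀ i ω, μt (i + 1) ω = pooledBayesUpdate (univ.erase m) (π m) π μm
      (fun k θ => f k θ (ξ k (i + 1) ω)) (μt i ω) := fun i ω => funext (hμt i ω)
  have hpos : ∀ i ω θ, 0 < μt i ω θ := by
    intro i
    induction i with
    | zero => simpa [hinit] using fun _ => hμ₀pos
    | succ i ih =>
      intro ω
      rw [hupdate]
      exact pooledBayesUpdate_pos hμmpos (ih ω) fun k _ θ => hfpos k θ _
  refine ⟨fun θ _ => ?_, ?_⟩
  · refine tendsto_integral_of_pooled_recurrence (hπ m).1 (by linarith [(hπ m).2])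
      (by rw [sum_erase_eq_sub (mem_univ m), hπsum])
      (g := fun k i ω => Real.log (f k θ₀ (ξ k i ω) / f k θ (ξ k i ω)))
      (by simpa only [hinit] using integrable_const _)
      (fun k hk i => hllrint k (ne_of_mem_erase hk) i θ) (fun k hk i => ?_) fun i ω => ?_
    · rw [hd, integral_comp_eq_integral_density_mul (h := fun x => Real.log (f k θ₀ x / f k θ x))
        (hξmeas k i) (hfmeas k θ₀) (fun x => (hfpos k θ₀ x).le)
        (by fun_prop) (hξlaw k (ne_of_mem_erase hk) i)]
    · rw [hupdate]
      exact log_pooledBayesUpdate_div hμmpos (hpos i ω) (fun k _ θ => hfpos k θ _) θ₀ θ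
  · congr 3
    refine sum_congr rfl fun θ _ => ?_
    rw [exp_neg_add_log_div (hμmpos θ₀) (hμmpos θ), neg_mul]

/-- **Theorem 2 (synchronous collaboration under an intervention).**
Agent `m`'s intermediate belief is fixed at a pmf `μm`, while the remaining agents
perform Bayesian adaptation on i.i.d. observations drawn from their true likelihoods, and
the fusion center combines `μ̃_i(θ) ∝ μm(θ)^{π_m} ∏_{k≠m} ψ̃_{k,i}(θ)^{π_k}`.  Then for
every wrong hypothesis `θ ≠ θ°` the expected log-belief ratio
`λ̃_i(θ) = E[log(μ̃_i(θ°)/μ̃_i(θ))]` converges to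
`λ̃_∞(θ) = (1/π_m) ∑_{k≠m} π_k d_k(θ) + log(μm(θ°)/μm(θ))`, and consequently the causal
impact `C_m = 1 − 1/(1 + ∑_{θ≠θ°} exp(−λ̃_∞(θ)))` equals
`1 − 1/(1 + ∑_{θ≠θ°} (μm(θ)/μm(θ°)) exp(−(1/π_m) ∑_{k≠m} π_k d_k(θ)))`. -/
theorem synchronous_intervention_causal_impact
    {K : ℕ} (hK : 2 ≤ K)
    {Θ : Type*} [Fintype Θ] [DecidableEq Θ] [Nonempty Θ] (θ₀ : Θ)
    (π : Fin K → ℝ) (hπ : ∀ k, π k ∈ Set.Ioo (0 : ℝ) 1) (hπsum : ∑ k, π k = 1)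
    (m : Fin K)
    {X : Fin K → Type*} [∀ k, MeasurableSpace (X k)]
    (ν : ∀ k, Measure (X k)) (hν : ∀ k, SigmaFinite (ν k))
    (f : ∀ k, Θ → X k → ℝ)
    (hfpos : ∀ k θ x, 0 < f k θ x)
    (hfmeas : ∀ k θ, Measurable (f k θ))
    (hfprob : ∀ k θ, ∫ x, f k θ x ∂ν k = 1)
    (d : Fin K → Θ → ℝ)
    (hdint : ∀ k θ, Integrable (fun x => f k θ₀ x * Real.log (f k θ₀ x / f k θ x)) (ν k))
    (hd : ∀ k θ, d k θ = ∫ x, f k θ₀ x * Real.log (f k θ₀ x / f k θ x) ∂ν k)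
    {Ω : Type*} [MeasureSpace Ω] [IsProbabilityMeasure (ℙ : Measure Ω)]
    (ξ : ∀ k : Fin K, ℕ → Ω → X k)
    (hξmeas : ∀ k i, Measurable (ξ k i))
    (hξindep : ∀ k, k ≠ m → iIndepFun (ξ k) ℙ)
    (hξlaw : ∀ k, k ≠ m → ∀ i, Measure.map (ξ k i) ℙ =
      (ν k).withDensity (fun x => ENNReal.ofReal (f k θ₀ x)))
    (hllrint : ∀ k, k ≠ m → ∀ (i : ℕ) (θ : Θ),
      Integrable (fun ω => Real.log (f k θ₀ (ξ k i ω) / f k θ (ξ k i ω))) ℙ)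
    (μm : Θ → ℝ) (hμmpos : ∀ θ, 0 < μm θ) (hμmsum : ∑ θ, μm θ = 1)
    (μ₀ : Θ → ℝ) (hμ₀pos : ∀ θ, 0 < μ₀ θ) (hμ₀sum : ∑ θ, μ₀ θ = 1)
    (μt : ℕ → Ω → Θ → ℝ)
    (hinit : ∀ ω, μt 0 ω = μ₀)
    (hμt : ∀ (i : ℕ) (ω : Ω) (θ : Θ), μt (i + 1) ω θ =
      (μm θ ^ π m * ∏ k ∈ univ.erase m,
          (f k θ (ξ k (i + 1) ω) * μt i ω θ /
            ∑ θ', f k θ' (ξ k (i + 1) ω) * μt i ω θ') ^ π k) /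
        ∑ θ'', μm θ'' ^ π m * ∏ k ∈ univ.erase m,
          (f k θ'' (ξ k (i + 1) ω) * μt i ω θ'' /
            ∑ θ', f k θ' (ξ k (i + 1) ω) * μt i ω θ') ^ π k) :
    (∀ θ, θ ≠ θ₀ →
      Tendsto (fun i => ∫ ω, Real.log (μt i ω θ₀ / μt i ω θ) ∂ℙ) atTop
        (nhds ((1 / π m) * ∑ k ∈ univ.erase m, π k * d k θ +
          Real.log (μm θ₀ / μm θ)))) ∧
    1 - 1 / (1 + ∑ θ ∈ univ.erase θ₀,
        Real.exp (-((1 / π m) * ∑ k ∈ univ.erase m, π k * d k θ +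
          Real.log (μm θ₀ / μm θ)))) =
      1 - 1 / (1 + ∑ θ ∈ univ.erase θ₀, (μm θ / μm θ₀) *
        Real.exp (-(1 / π m) * ∑ k ∈ univ.erase m, π k * d k θ)) :=
  synchronous_intervention_causal_impact_general θ₀ π hπ hπsum m ν f hfpos hfmeas d hd ξ hξmeas
    hξlaw hllrint μm hμmpos μ₀ hμ₀pos μt hinit hμt
end

section
/- Let m = 1 be the intervened agent. Let a = (π_1 p_1, …, π_K p_K)ᵀ, p = (p_1,…,p_K)ᵀ, A = diag(a), P̄ = diag(1-p_1,…,1-p_K), s_k = p_k ∑_{ℓ≠k} π_ℓ(1-p_ℓ), σ = ∑_k π_k(1-p_k). Let R be the (K+1)×(K+1) matrix with upper-left block P̄A + P̄ + p aᵀ, upper-right column (s_1,…,s_K)ᵀ, lower-left row aᵀ, lower-right entry σ, and U the (K+1)×K matrix with first K rows P̄A + P̄ + p aᵀ and last row aᵀ. Let R̃ be R with its first row and first column removed, Ũ be U with its first row removed, and, for a fixed θ ≠ θ°, d̃ = (c, d_2(θ), …, d_K(θ))ᵀ where c = log( μ_1(θ°)/μ_1(θ) ). Then I − R̃ is invertible,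 the recursion Λ̃_i = R̃ Λ̃_{i-1} + Ũ d̃ converges for every initial vector to (I − R̃)^{-1} Ũ d̃, and the last coordinate of this limit (the fusion center's expected log-belief ratio) equals λ̃_∞(θ) = (1/(π_1 p_1)) ∑_{k≠1} π_k d_k(θ) / ( 1 − π_k (1 − p_k) ) + c. -/
/-!
Each row of `R` is a probability vector, and every row other than that of the intervened
agent gives positive weight (`p_k π_1 p_1`, resp. `π_1 p_1` at the fusion center) to the
intervened agent's column. Deleting that row and column therefore leaves a matrix `R̃` with
absolute row sums below one, i.e. `‖R̃‖_∞ < 1`: so `I - R̃` is invertible and the affine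
recursion converges geometrically to `(I - R̃)⁻¹ Ũ d̃`.

The limit is computed in the full system, with the intervened agent kept as a coordinate held
at `c`. The vector that is `λ̃_∞` at the fusion center and
`λ̃_∞ + d_k / (p_k (1 - π_k (1 - p_k)))` at agent `k ≠ 1` has `a`-weighted agent mean `λ̃_∞`;
this is exactly what makes it a fixed point of `Z ↦ R Z + (0, d_2, …, d_K, 0)` away from the
intervened agent.
-/

open Finset Filter Matrix Topology

section RowSumContraction

attribute [local instance] Matrix.linftyOpNormedAddCommGroup Matrix.linftyOpNormedRing
  Matrix.linftyOpNormedSpace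

variable {ι : Type*} [Fintype ι] [DecidableEq ι] {M : Matrix ι ι ℝ}

theorem Matrix.linfty_opNorm_lt_one_of_sum_abs_lt_one (hM : ∀ i, ∑ j, |M i j| < 1) :
    ‖M‖ < 1 := by
  rw [linfty_opNorm_def, ← NNReal.coe_one, NNReal.coe_lt_coe,
    Finset.sup_lt_iff zero_lt_one]
  intro i _
  rw [← NNReal.coe_lt_coe]
  simpa using hM i

theorem Matrix.isUnit_one_sub_of_sum_abs_lt_one (hM : ∀ i, ∑ j, |M i j| < 1) :
    IsUnit (1 - M) :=
  -- The library's `CompleteSpace` instance on matrices is for the product uniformity, not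
  -- for the uniformity of the local `L∞` operator norm.
  haveI : CompleteSpace (Matrix ι ι ℝ) := FiniteDimensional.complete ℝ _
  isUnit_one_sub_of_norm_lt_one (linfty_opNorm_lt_one_of_sum_abs_lt_one hM)

theorem Matrix.tendsto_affine_recursion_of_sum_abs_lt_one (hM : ∀ i, ∑ j, |M i j| < 1)
    (b : ι → ℝ) {Λ : ℕ → ι → ℝ} (hΛ : ∀ i, Λ (i + 1) = M *ᵥ Λ i + b) :
    Tendsto Λ atTop (𝓝 ((1 - M)⁻¹ *ᵥ b)) := by
  set x := (1 - M)⁻¹ *ᵥ b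
  have hx : x = M *ᵥ x + b := by
    have : (1 - M) *ᵥ x = b := by
      rw [mulVec_mulVec, mul_nonsing_inv _ ((isUnit_iff_isUnit_det _).mp
        (isUnit_one_sub_of_sum_abs_lt_one hM)), one_mulVec]
    rwa [sub_mulVec, one_mulVec, sub_eq_iff_eq_add'] at this
  have herr : ∀ i, Λ i - x = (M ^ i) *ᵥ (Λ 0 - x) := by
    intro i
    induction i with
    | zero => simp
    | succ i ih =>
      rw [pow_succ', ← mulVec_mulVec, ← ih, mulVec_sub, hΛ]
      nth_rewrite 1 [hx]
      abel
  have hpow : Tendsto (fun i => (M ^ i) *ᵥ (Λ 0 - x)) atTop (𝓝 0) := by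
    have := ((continuous_id.matrix_mulVec (continuous_const (y := Λ 0 - x))).tendsto 0).comp
      (tendsto_pow_atTop_nhds_zero_of_norm_lt_one
        (linfty_opNorm_lt_one_of_sum_abs_lt_one hM))
    simpa only [Function.comp_def, id, zero_mulVec] using this
  simpa only [← herr, sub_add_cancel, zero_add] using hpow.add_const x

end RowSumContraction

theorem Matrix.submatrix_succ_mulVec {α : Type*} [NonUnitalNonAssocSemiring α] {N : ℕ}
    (M : Matrix (Fin (N + 1)) (Fin (N + 1)) α) (x : Fin N → α) (j : Fin N) :
    (M.submatrix Fin.succ Fin.succ *ᵥ x) j = (M *ᵥ Fin.cons 0 x) j.succ := by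
  simp [mulVec, dotProduct, Fin.sum_univ_succ]

theorem Matrix.submatrix_castSucc_mulVec {α m : Type*} [NonUnitalNonAssocSemiring α] {N : ℕ}
    (M : Matrix m (Fin (N + 1)) α) (w : Fin N → α) :
    M.submatrix id Fin.castSucc *ᵥ w = M *ᵥ Fin.snoc w 0 := by
  ext i
  simp [mulVec, dotProduct, Fin.sum_univ_castSucc]

/-- `Y - w` vanishes at `0`, so it is `Fin.cons 0` of the unknown of the reduced system. -/
theorem Matrix.one_sub_submatrix_succ_mulVec_tail {α : Type*} [Ring α] {N : ℕ}
    (R : Matrix (Fin (N + 1)) (Fin (N + 1)) α) {w Y : Fin (N + 1) → α} (h0 : Y 0 = w 0)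
    (hY : ∀ i : Fin N, Y i.succ = (R *ᵥ Y) i.succ + w i.succ) :
    (1 - R.submatrix Fin.succ Fin.succ) *ᵥ Fin.tail (Y - w) = Fin.tail (R *ᵥ w) := by
  have hcons : Fin.cons 0 (Fin.tail (Y - w)) = Y - w := by
    conv_rhs => rw [← Fin.cons_self_tail (Y - w)]
    rw [Pi.sub_apply, h0, sub_self]
  ext j
  rw [sub_mulVec, one_mulVec, Pi.sub_apply, submatrix_succ_mulVec, hcons, mulVec_sub]
  simp only [Fin.tail, Pi.sub_apply, hY]
  abel

theorem Matrix.sum_abs_submatrix_succ_lt_one {N : ℕ} {R : Matrix (Fin (N + 1)) (Fin (N + 1)) ℝ}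
    (hR : ∀ i j, 0 ≤ R i j) (hrow : R *ᵥ 1 = 1) (hzero : ∀ i : Fin N, 0 < R i.succ 0)
    (i : Fin N) :
    ∑ j, |R.submatrix Fin.succ Fin.succ i j| < 1 := by
  have hsum : R i.succ 0 + ∑ j : Fin N, R i.succ j.succ = 1 := by
    simpa [mulVec, dotProduct, Fin.sum_univ_succ] using congrFun hrow i.succ
  simp only [submatrix_apply, abs_of_nonneg (hR _ _)]
  linarith [hzero i]

namespace SymmetricProtocol

variable {n : ℕ} (π p : Fin (n + 1) → ℝ)

/-- Agents are `Fin.castSucc k`, the fusion center is `Fin.last`. -/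
def R : Matrix (Fin (n + 2)) (Fin (n + 2)) ℝ :=
  Matrix.of fun i j =>
    Fin.lastCases
      (Fin.lastCases (∑ k, π k * (1 - p k)) (fun k => π k * p k) j)
      (fun i => Fin.lastCases (p i * ∑ l ∈ univ.erase i, π l * (1 - p l))
        (fun k => (if i = k then (1 - p i) * (π i * p i) + (1 - p i) else 0) + p i * (π k * p k))
        j)
      i

theorem eq_R {M : Matrix (Fin (n + 2)) (Fin (n + 2)) ℝ}
    (h11 : ∀ j k : Fin (n + 1), M j.castSucc k.castSucc =
      (if j = k then (1 - p j) * (π j * p j) + (1 - p j) else 0) + p j * (π k * p k))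
    (h12 : ∀ j : Fin (n + 1), M j.castSucc (Fin.last (n + 1)) =
      p j * ∑ l ∈ univ.erase j, π l * (1 - p l))
    (h21 : ∀ k : Fin (n + 1), M (Fin.last (n + 1)) k.castSucc = π k * p k)
    (h22 : M (Fin.last (n + 1)) (Fin.last (n + 1)) = ∑ k, π k * (1 - p k)) :
    M = R π p := by
  ext i j
  induction i using Fin.lastCases <;> induction j using Fin.lastCases <;>
    simp only [R, of_apply, Fin.lastCases_last, Fin.lastCases_castSucc, h11, h12, h21, h22]

theorem eq_submatrix_R {M : Matrix (Fin (n + 2)) (Fin (n + 1)) ℝ}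
    (h1 : ∀ j k : Fin (n + 1), M j.castSucc k =
      (if j = k then (1 - p j) * (π j * p j) + (1 - p j) else 0) + p j * (π k * p k))
    (h2 : ∀ k : Fin (n + 1), M (Fin.last (n + 1)) k = π k * p k) :
    M = (R π p).submatrix id Fin.castSucc := by
  ext i k
  induction i using Fin.lastCases <;>
    simp only [R, submatrix_apply, id, of_apply, Fin.lastCases_last, Fin.lastCases_castSucc, h1, h2]

theorem R_mulVec_castSucc (v : Fin (n + 2) → ℝ) (j : Fin (n + 1)) :
    (R π p *ᵥ v) j.castSucc =
      ((1 - p j) * (π j * p j) + (1 - p j)) * v j.castSucc +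
        p j * (∑ k, π k * p k * v k.castSucc +
          (∑ l ∈ univ.erase j, π l * (1 - p l)) * v (Fin.last _)) := by
  rw [mulVec, dotProduct, Fin.sum_univ_castSucc]
  simp only [R, of_apply, Fin.lastCases_castSucc, Fin.lastCases_last, add_mul, ite_mul,
    zero_mul, sum_add_distrib, sum_ite_eq, mem_univ, if_true]
  rw [mul_add (p j), mul_sum univ]
  simp only [mul_assoc]
  ring

theorem R_mulVec_last (v : Fin (n + 2) → ℝ) :
    (R π p *ᵥ v) (Fin.last _) =
      ∑ k, π k * p k * v k.castSucc + (∑ k, π k * (1 - p k)) * v (Fin.last _) := by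
  rw [mulVec, dotProduct, Fin.sum_univ_castSucc]
  simp [R]

theorem sum_mul_add_sum_mul_one_sub (hπ : ∑ k, π k = 1) :
    ∑ k, π k * p k + ∑ k, π k * (1 - p k) = 1 := by
  simp_rw [← sum_add_distrib, ← mul_add, add_sub_cancel, mul_one, hπ]

theorem R_mulVec_one (hπ : ∑ k, π k = 1) : R π p *ᵥ 1 = 1 := by
  have hmass := sum_mul_add_sum_mul_one_sub π p hπ
  ext i
  induction i using Fin.lastCases with
  | last => simpa [R_mulVec_last] using hmass
  | cast j =>
    rw [R_mulVec_castSucc, sum_erase_eq_sub (mem_univ j)]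
    simp only [Pi.one_apply, mul_one]
    linear_combination p j * hmass

theorem R_nonneg (hπ : ∀ k, 0 ≤ π k) (hp : ∀ k, p k ∈ Set.Icc (0 : ℝ) 1)
    (i j : Fin (n + 2)) :
    0 ≤ R π p i j := by
  have hp0 k : 0 ≤ p k := (hp k).1
  have hp1 k : 0 ≤ 1 - p k := sub_nonneg.mpr (hp k).2
  have ha k : 0 ≤ π k * p k := mul_nonneg (hπ k) (hp0 k)
  have hσ k : 0 ≤ π k * (1 - p k) := mul_nonneg (hπ k) (hp1 k)
  induction i using Fin.lastCases <;> induction j using Fin.lastCases <;>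
    simp only [R, of_apply, Fin.lastCases_last, Fin.lastCases_castSucc]
  · exact sum_nonneg fun k _ => hσ k
  · exact ha _
  · exact mul_nonneg (hp0 _) (sum_nonneg fun k _ => hσ k)
  · refine add_nonneg ?_ (mul_nonneg (hp0 _) (ha _))
    split_ifs
    exacts [add_nonneg (mul_nonneg (hp1 _) (ha _)) (hp1 _), le_rfl]

theorem R_succ_zero_pos (hπ : 0 < π 0) (hp : ∀ k, 0 < p k) (i : Fin (n + 1)) :
    0 < R π p i.succ 0 := by
  rw [← Fin.castSucc_zero]
  induction i using Fin.lastCases with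
  | last =>
    simp only [Fin.succ_last, R, of_apply, Fin.lastCases_last, Fin.lastCases_castSucc]
    exact mul_pos hπ (hp 0)
  | cast m =>
    simp only [Fin.succ_castSucc, R, of_apply, Fin.lastCases_castSucc, Fin.succ_ne_zero,
      if_false, zero_add]
    exact mul_pos (hp m.succ) (mul_pos hπ (hp 0))

/-- `λ̃_∞(θ)`. -/
noncomputable def fusionLimit (d : Fin (n + 1) → ℝ) (c : ℝ) : ℝ :=
  1 / (π 0 * p 0) * ∑ k ∈ univ.erase 0, π k * d k / (1 - π k * (1 - p k)) + c

def forcing (d : Fin (n + 1) → ℝ) (c : ℝ) : Fin (n + 1) → ℝ :=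
  fun k => if k = 0 then c else d k

/-- The limit of `Z ↦ R Z + Fin.snoc (forcing d c) 0` with coordinate `0` held at `c`; the limit
of the reduced recursion is `Fin.tail (pinnedLimit π p d c - Fin.snoc (forcing d c) 0)`. -/
noncomputable def pinnedLimit (d : Fin (n + 1) → ℝ) (c : ℝ) : Fin (n + 2) → ℝ :=
  Fin.snoc (α := fun _ => ℝ)
    (fun k => if k = 0 then c else fusionLimit π p d c + d k / (p k * (1 - π k * (1 - p k))))
    (fusionLimit π p d c)

variable {π p}

theorem sum_mul_pinnedLimit (hπ : π 0 ≠ 0) (hp : ∀ k, p k ≠ 0)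
    (hq : ∀ k, 1 - π k * (1 - p k) ≠ 0) (d : Fin (n + 1) → ℝ) (c : ℝ) :
    ∑ k, π k * p k * pinnedLimit π p d c k.castSucc =
      (∑ k, π k * p k) * fusionLimit π p d c := by
  set y := fusionLimit π p d c
  have hy : π 0 * p 0 * (y - c) = ∑ k ∈ univ.erase 0, π k * d k / (1 - π k * (1 - p k)) := by
    simp only [y, fusionLimit, add_sub_cancel_right]
    field_simp [hp 0]
  have hagent : ∀ k ∈ univ.erase 0,
      π k * p k * (if k = 0 then c else y + d k / (p k * (1 - π k * (1 - p k)))) =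
        π k * p k * y + π k * d k / (1 - π k * (1 - p k)) := by
    intro k hk
    rw [if_neg (ne_of_mem_erase hk)]
    field_simp [hp k, hq k]
  simp only [pinnedLimit, Fin.snoc_castSucc]
  rw [← add_sum_erase _ _ (mem_univ 0), if_pos rfl, sum_congr rfl hagent, sum_add_distrib,
    ← sum_mul, ← add_sum_erase univ (fun k => π k * p k) (mem_univ 0)]
  linear_combination -hy

theorem pinnedLimit_succ (hπsum : ∑ k, π k = 1) (hπ : π 0 ≠ 0) (hp : ∀ k, p k ≠ 0)
    (hq : ∀ k, 1 - π k * (1 - p k) ≠ 0) (d : Fin (n + 1) → ℝ) (c : ℝ) (i : Fin (n + 1)) :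
    pinnedLimit π p d c i.succ =
      (R π p *ᵥ pinnedLimit π p d c) i.succ +
        Fin.snoc (α := fun _ => ℝ) (forcing d c) 0 i.succ := by
  have hmass := sum_mul_add_sum_mul_one_sub π p hπsum
  have hbal := sum_mul_pinnedLimit hπ hp hq d c
  induction i using Fin.lastCases with
  | last =>
    rw [Fin.succ_last, R_mulVec_last, hbal]
    simp only [pinnedLimit, Fin.snoc_last, add_zero]
    linear_combination -fusionLimit π p d c * hmass
  | cast m =>
    rw [Fin.succ_castSucc, R_mulVec_castSucc, hbal, sum_erase_eq_sub (mem_univ _)]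
    simp only [pinnedLimit, forcing, Fin.snoc_castSucc, Fin.snoc_last, if_neg (Fin.succ_ne_zero m)]
    have he : p m.succ * (1 - π m.succ * (1 - p m.succ)) *
        (d m.succ / (p m.succ * (1 - π m.succ * (1 - p m.succ)))) = d m.succ :=
      mul_div_cancel₀ _ (mul_ne_zero (hp _) (hq _))
    linear_combination he - p m.succ * fusionLimit π p d c * hmass

theorem one_sub_submatrix_mulVec_pinnedLimit (hπsum : ∑ k, π k = 1) (hπ : π 0 ≠ 0)
    (hp : ∀ k, p k ≠ 0) (hq : ∀ k, 1 - π k * (1 - p k) ≠ 0) (d : Fin (n + 1) → ℝ)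
    (c : ℝ) :
    (1 - (R π p).submatrix Fin.succ Fin.succ) *ᵥ
        Fin.tail (pinnedLimit π p d c - Fin.snoc (α := fun _ => ℝ) (forcing d c) 0) =
      ((R π p).submatrix id Fin.castSucc).submatrix Fin.succ id *ᵥ forcing d c := by
  have h0 : pinnedLimit π p d c 0 = Fin.snoc (α := fun _ => ℝ) (forcing d c) 0 0 := by
    rw [← Fin.castSucc_zero]
    simp only [pinnedLimit, forcing, Fin.snoc_castSucc, if_pos]
  rw [one_sub_submatrix_succ_mulVec_tail _ h0 (pinnedLimit_succ hπsum hπ hp hq d c),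
    ← submatrix_castSucc_mulVec]
  rfl

end SymmetricProtocol

theorem symmetric_intervention_matrix_recursion_general
    {n : ℕ}
    (π p : Fin (n + 1) → ℝ)
    (hπ : ∀ k, π k ∈ Set.Ioo (0 : ℝ) 1) (hπsum : ∑ k, π k = 1)
    (hp : ∀ k, p k ∈ Set.Ioc (0 : ℝ) 1)
    (d : Fin (n + 1) → ℝ)
    (c : ℝ)
    (R : Matrix (Fin (n + 2)) (Fin (n + 2)) ℝ)
    (U : Matrix (Fin (n + 2)) (Fin (n + 1)) ℝ)
    (hR11 : ∀ j k : Fin (n + 1), R j.castSucc k.castSucc =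
      (if j = k then (1 - p j) * (π j * p j) + (1 - p j) else 0) + p j * (π k * p k))
    (hR12 : ∀ j : Fin (n + 1), R j.castSucc (Fin.last (n + 1)) =
      p j * ∑ l ∈ univ.erase j, π l * (1 - p l))
    (hR21 : ∀ k : Fin (n + 1), R (Fin.last (n + 1)) k.castSucc = π k * p k)
    (hR22 : R (Fin.last (n + 1)) (Fin.last (n + 1)) = ∑ k, π k * (1 - p k))
    (hU1 : ∀ j k : Fin (n + 1), U j.castSucc k =
      (if j = k then (1 - p j) * (π j * p j) + (1 - p j) else 0) + p j * (π k * p k))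
    (hU2 : ∀ k : Fin (n + 1), U (Fin.last (n + 1)) k = π k * p k)
    (Rt : Matrix (Fin (n + 1)) (Fin (n + 1)) ℝ)
    (hRt : Rt = R.submatrix Fin.succ Fin.succ)
    (Ut : Matrix (Fin (n + 1)) (Fin (n + 1)) ℝ)
    (hUt : Ut = U.submatrix Fin.succ id)
    (dt : Fin (n + 1) → ℝ)
    (hdt : ∀ j : Fin (n + 1), dt j = if j = 0 then c else d j) :
    IsUnit (1 - Rt) ∧
    (∀ Λ : ℕ → Fin (n + 1) → ℝ,
      (∀ i : ℕ, Λ (i + 1) = Rt.mulVec (Λ i) + Ut.mulVec dt) →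
      Tendsto Λ atTop (nhds ((1 - Rt)⁻¹.mulVec (Ut.mulVec dt)))) ∧
    ((1 - Rt)⁻¹.mulVec (Ut.mulVec dt)) (Fin.last n) =
      (1 / (π 0 * p 0)) *
        (∑ k ∈ univ.erase 0, π k * d k / (1 - π k * (1 - p k))) + c := by
  open SymmetricProtocol in
  have hπ0 : 0 < π 0 := (hπ 0).1
  have hp0 k : 0 < p k := (hp k).1
  have hq k : 1 - π k * (1 - p k) ≠ 0 := by
    nlinarith [(hπ k).1, (hπ k).2, (hp k).1, (hp k).2]
  obtain rfl := eq_R π p hR11 hR12 hR21 hR22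
  obtain rfl := eq_submatrix_R π p hU1 hU2
  obtain rfl : dt = forcing d c := funext hdt
  subst hRt hUt
  have hrow := sum_abs_submatrix_succ_lt_one
    (R_nonneg π p (fun k => (hπ k).1.le) (fun k => Set.Ioc_subset_Icc_self (hp k)))
    (R_mulVec_one π p hπsum) (R_succ_zero_pos π p hπ0 hp0)
  have hfix := one_sub_submatrix_mulVec_pinnedLimit hπsum hπ0.ne' (fun k => (hp0 k).ne') hq d c
  have hunit := isUnit_one_sub_of_sum_abs_lt_one hrow
  refine ⟨hunit, fun Λ hΛ => tendsto_affine_recursion_of_sum_abs_lt_one hrow _ hΛ, ?_⟩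
  rw [← hfix, mulVec_mulVec, nonsing_inv_mul _ ((isUnit_iff_isUnit_det _).mp hunit), one_mulVec]
  simp only [Fin.tail, Fin.succ_last, Pi.sub_apply, pinnedLimit, Fin.snoc_last, sub_zero]
  rfl

/-- **Theorem 4 (symmetric communication) via the matrix recursion.**
Agents are indexed by `Fin (n+1)` (so `K = n + 1 ≥ 2`), the intervened agent `m = 1`
corresponding to index `0`; the extended index set `Fin (n+2)` lists the agents
(via `Fin.castSucc`) followed by the fusion center (`Fin.last`).  `R` and `U` are as in
the pre-intervention recursion; `R̃ = R` with its first row and column removed,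
`Ũ = U` with its first row removed (both realized as submatrices along `Fin.succ`),
and `d̃ = (c, d_2(θ), …, d_K(θ))` with `c = log(μ_1(θ°)/μ_1(θ))` for a fixed wrong
hypothesis `θ`.  Then `I − R̃` is invertible, the recursion `Λ̃_i = R̃ Λ̃_{i-1} + Ũ d̃`
converges for every initial vector to `(I − R̃)⁻¹ Ũ d̃`, and the last coordinate of the
limit equals `λ̃_∞(θ) = (1/(π_1 p_1)) ∑_{k≠1} π_k d_k(θ) / (1 − π_k (1 − p_k)) + c`. -/
theorem symmetric_intervention_matrix_recursion
    {n : ℕ} (hn : 1 ≤ n)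
    {Θ : Type*} [Fintype Θ] (θ₀ θw : Θ) (hθw : θw ≠ θ₀)
    (π p : Fin (n + 1) → ℝ)
    (hπ : ∀ k, π k ∈ Set.Ioo (0 : ℝ) 1) (hπsum : ∑ k, π k = 1)
    (hp : ∀ k, p k ∈ Set.Ioc (0 : ℝ) 1)
    (d : Fin (n + 1) → ℝ) (hd : ∀ k, 0 ≤ d k)
    (μ₁ : Θ → ℝ) (hμ₁ : ∀ θ, 0 < μ₁ θ) (hμ₁sum : ∑ θ, μ₁ θ = 1)
    (c : ℝ) (hc : c = Real.log (μ₁ θ₀ / μ₁ θw))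
    (R : Matrix (Fin (n + 2)) (Fin (n + 2)) ℝ)
    (U : Matrix (Fin (n + 2)) (Fin (n + 1)) ℝ)
    (hR11 : ∀ j k : Fin (n + 1), R j.castSucc k.castSucc =
      (if j = k then (1 - p j) * (π j * p j) + (1 - p j) else 0) + p j * (π k * p k))
    (hR12 : ∀ j : Fin (n + 1), R j.castSucc (Fin.last (n + 1)) =
      p j * ∑ l ∈ univ.erase j, π l * (1 - p l))
    (hR21 : ∀ k : Fin (n + 1), R (Fin.last (n + 1)) k.castSucc = π k * p k)
    (hR22 : R (Fin.last (n + 1)) (Fin.last (n + 1)) = ∑ k, π k * (1 - p k))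
    (hU1 : ∀ j k : Fin (n + 1), U j.castSucc k =
      (if j = k then (1 - p j) * (π j * p j) + (1 - p j) else 0) + p j * (π k * p k))
    (hU2 : ∀ k : Fin (n + 1), U (Fin.last (n + 1)) k = π k * p k)
    (Rt : Matrix (Fin (n + 1)) (Fin (n + 1)) ℝ)
    (hRt : Rt = R.submatrix Fin.succ Fin.succ)
    (Ut : Matrix (Fin (n + 1)) (Fin (n + 1)) ℝ)
    (hUt : Ut = U.submatrix Fin.succ id)
    (dt : Fin (n + 1) → ℝ)
    (hdt : ∀ j : Fin (n + 1), dt j = if j = 0 then c else d j) :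
    IsUnit (1 - Rt) ∧
    (∀ Λ : ℕ → Fin (n + 1) → ℝ,
      (∀ i : ℕ, Λ (i + 1) = Rt.mulVec (Λ i) + Ut.mulVec dt) →
      Tendsto Λ atTop (nhds ((1 - Rt)⁻¹.mulVec (Ut.mulVec dt)))) ∧
    ((1 - Rt)⁻¹.mulVec (Ut.mulVec dt)) (Fin.last n) =
      (1 / (π 0 * p 0)) *
        (∑ k ∈ univ.erase 0, π k * d k / (1 - π k * (1 - p k))) + c :=
  symmetric_intervention_matrix_recursion_general π p hπ hπsum hp d c R U hR11 hR12 hR21 hR22 hU1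
    hU2 Rt hRt Ut hUt dt hdt
end

section
/- Fix an agent m and a wrong hypothesis θ ≠ θ°, and write L = log( μ_m(θ)/μ_m(θ°) ) for the misinformation strength. Define the asymmetric-scenario asymptotic log-belief ratio λ̃^{asym}(θ) = (1/π_m) ∑_{k≠m} π_k p_k d_k(θ) − p_m L and the symmetric-scenario one λ̃^{sym}(θ) = (1/(π_m p_m)) ∑_{k≠m} π_k d_k(θ)/(1 − π_k(1 − p_k)) − L. If p_m < 1 and L ≥ ∑_{k≠m} ( π_k d_k(θ) / ( π_m (1 − p_m) ) ) · ( 1/( p_m (1 − π_k (1 − p_k)) ) − p_k ), then λ̃^{asym}(θ) ≥ λ̃^{sym}(θ). Moreover, if this condition holds for every θ ≠ θ°, then the resulting causal impacts satisfy C_m^{sym} ≥ C_m^{asym}, where for a family λ(θ), θ ≠ θ°, the causal impact is C = 1 − 1/(1 + ∑_{θ≠θ°} exp(−λ(θ))). -/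
open Finset

/-- **Corollary 1 (comparison of asynchronous scenarios).**
Fix an intervened agent `m` and a wrong hypothesis `θw ≠ θ°`, and let
`L = log(μ_m(θw)/μ_m(θ°))` be the misinformation strength.  With the asymmetric-scenario
asymptotic log-belief ratio `λ̃ᵃ(θ) = (1/π_m) ∑_{k≠m} π_k p_k d_k(θ) − p_m L(θ)` and the
symmetric-scenario one `λ̃ˢ(θ) = (1/(π_m p_m)) ∑_{k≠m} π_k d_k(θ)/(1−π_k(1−p_k)) − L(θ)`,
if `p_m < 1` and the misinformation strength exceeds the stated threshold at `θw`, then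
`λ̃ᵃ(θw) ≥ λ̃ˢ(θw)`; moreover, if the threshold condition holds at every wrong hypothesis,
the causal impacts `C = 1 − 1/(1 + ∑_{θ≠θ°} exp(−λ(θ)))` satisfy `Cˢ ≥ Cᵃ`. -/
theorem comparison_of_asynchronous_scenarios
    {K : ℕ} (hK : 2 ≤ K)
    {Θ : Type*} [Fintype Θ] [DecidableEq Θ] (θ₀ : Θ)
    (π p : Fin K → ℝ)
    (hπ : ∀ k, π k ∈ Set.Ioo (0 : ℝ) 1) (hπsum : ∑ k, π k = 1)
    (hp : ∀ k, p k ∈ Set.Ioc (0 : ℝ) 1)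
    (d : Fin K → Θ → ℝ) (hd : ∀ k θ, 0 ≤ d k θ)
    (m : Fin K)
    (μm : Θ → ℝ) (hμm : ∀ θ, 0 < μm θ) (hμmsum : ∑ θ, μm θ = 1)
    (lamAsym lamSym : Θ → ℝ)
    (hlamAsym : ∀ θ, lamAsym θ =
      (1 / π m) * ∑ k ∈ univ.erase m, π k * p k * d k θ -
        p m * Real.log (μm θ / μm θ₀))
    (hlamSym : ∀ θ, lamSym θ =
      (1 / (π m * p m)) * ∑ k ∈ univ.erase m, π k * d k θ / (1 - π k * (1 - p k)) -
        Real.log (μm θ / μm θ₀))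
    (hpm : p m < 1)
    (θw : Θ) (hθw : θw ≠ θ₀)
    (hL : Real.log (μm θw / μm θ₀) ≥
      ∑ k ∈ univ.erase m, (π k * d k θw / (π m * (1 - p m))) *
        (1 / (p m * (1 - π k * (1 - p k))) - p k)) :
    lamAsym θw ≥ lamSym θw ∧
    ((∀ θ, θ ≠ θ₀ → Real.log (μm θ / μm θ₀) ≥
        ∑ k ∈ univ.erase m, (π k * d k θ / (π m * (1 - p m))) *
          (1 / (p m * (1 - π k * (1 - p k))) - p k)) →
      1 - 1 / (1 + ∑ θ ∈ univ.erase θ₀, Real.exp (-(lamAsym θ))) ≤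
        1 - 1 / (1 + ∑ θ ∈ univ.erase θ₀, Real.exp (-(lamSym θ)))) := by

  obtain ⟨hπm0, hπm1⟩ := hπ m
  obtain ⟨hpm0, hpm1⟩ := hp m
  have h1pm : (0:ℝ) < 1 - p m := by linarith
  have hc : ∀ k : Fin K, (0:ℝ) < 1 - π k * (1 - p k) := by
    intro k
    obtain ⟨h1, h2⟩ := hπ k
    obtain ⟨h3, h4⟩ := hp k
    nlinarith
  have key : ∀ θ, Real.log (μm θ / μm θ₀) ≥
      ∑ k ∈ univ.erase m, (π k * d k θ / (π m * (1 - p m))) *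
        (1 / (p m * (1 - π k * (1 - p k))) - p k) → lamAsym θ ≥ lamSym θ := by
    intro θ hLθ
    rw [hlamAsym, hlamSym]
    have hsum : (1 / π m) * ∑ k ∈ univ.erase m, π k * p k * d k θ
        - (1 / (π m * p m)) * ∑ k ∈ univ.erase m, π k * d k θ / (1 - π k * (1 - p k))
        = - ((1 - p m) * ∑ k ∈ univ.erase m,
            (π k * d k θ / (π m * (1 - p m))) * (1 / (p m * (1 - π k * (1 - p k))) - p k)) := by
      rw [Finset.mul_sum, Finset.mul_sum, Finset.mul_sum, ← Finset.sum_sub_distrib,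
        ← Finset.sum_neg_distrib]
      refine Finset.sum_congr rfl fun k _ => ?_
      have hck := hc k
      field_simp
      ring
    have hmul : (1 - p m) * (∑ k ∈ univ.erase m,
        (π k * d k θ / (π m * (1 - p m))) * (1 / (p m * (1 - π k * (1 - p k))) - p k))
        ≤ (1 - p m) * Real.log (μm θ / μm θ₀) :=
      mul_le_mul_of_nonneg_left hLθ (le_of_lt h1pm)
    nlinarith [hsum, hmul]
  refine ⟨key θw hL, fun hall => ?_⟩
  have hle : ∀ θ ∈ univ.erase θ₀, Real.exp (-(lamAsym θ)) ≤ Real.exp (-(lamSym θ)) := by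
    intro θ hθ
    have := key θ (hall θ (Finset.ne_of_mem_erase hθ))
    exact Real.exp_le_exp.mpr (by linarith)
  have hsumle : ∑ θ ∈ univ.erase θ₀, Real.exp (-(lamAsym θ)) ≤
      ∑ θ ∈ univ.erase θ₀, Real.exp (-(lamSym θ)) := Finset.sum_le_sum hle
  have hA : (0:ℝ) < 1 + ∑ θ ∈ univ.erase θ₀, Real.exp (-(lamAsym θ)) := by
    positivity
  have hS : (0:ℝ) < 1 + ∑ θ ∈ univ.erase θ₀, Real.exp (-(lamSym θ)) := by
    positivity
  have hdiv : 1 / (1 + ∑ θ ∈ univ.erase θ₀, Real.exp (-(lamSym θ))) ≤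
      1 / (1 + ∑ θ ∈ univ.erase θ₀, Real.exp (-(lamAsym θ))) :=
    one_div_le_one_div_of_le hA (by linarith)
  linarith
end

section
/- Let K ≥ 2, let π_1,…,π_K ∈ (0,1) satisfy ∑_{k=1}^K π_k = 1, let p_1,…,p_K ∈ (0,1], and set s_k = p_k ∑_{ℓ≠k} π_ℓ (1 − p_ℓ). Then ( ∑_{k=1}^K π_k p_k ) · ( 1 − ∑_{k≠1} π_k p_k / ( 1 − (1−p_k) π_k ) ) − ∑_{k≠1} π_k s_k / ( 1 − (1−p_k) π_k ) = π_1 p_1. (Note 1 − (1−p_k)π_k > 0 for all k, so all terms are well defined.) -/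
/-!
Write `A = ∑ π_k p_k` and `D_k = 1 - (1 - p_k) π_k`. Since the `π_ℓ` sum to `1`, the
off-diagonal sum in `s_k` is `1 - A - π_k (1 - p_k)`, so `A π_k p_k + π_k s_k = π_k p_k D_k`.
Hence each `k ≠ 1` removes exactly `π_k p_k` from `A`, and what remains is `π_1 p_1`.
-/

open Finset

lemma one_sub_one_sub_mul_pos {p π : ℝ} (hp₀ : 0 < p) (hp₁ : p ≤ 1) (hπ : π ≤ 1) :
    0 < 1 - (1 - p) * π := by
  nlinarith

lemma sum_erase_mul_one_sub {ι R : Type*} [Fintype ι] [DecidableEq ι] [CommRing R]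
    (π p : ι → R) (hπ : ∑ l, π l = 1) (k : ι) :
    ∑ l ∈ univ.erase k, π l * (1 - p l) = (1 - ∑ l, π l * p l) - π k * (1 - p k) := by
  rw [sum_erase_eq_sub (mem_univ k)]
  simp only [mul_one_sub, sum_sub_distrib, hπ]

lemma mul_div_add_mul_div_eq {A π p : ℝ} (hD : 1 - (1 - p) * π ≠ 0) :
    A * (π * p / (1 - (1 - p) * π)) +
        π * (p * ((1 - A) - π * (1 - p))) / (1 - (1 - p) * π) = π * p := by
  rw [mul_div_assoc', ← add_div, div_eq_iff hD]
  ring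

lemma mul_one_sub_sum_sub_sum {ι R : Type*} [CommRing R] (t : Finset ι) (A : R)
    (f g h : ι → R) (hfg : ∀ k ∈ t, A * f k + g k = h k) :
    A * (1 - ∑ k ∈ t, f k) - ∑ k ∈ t, g k = A - ∑ k ∈ t, h k := by
  rw [← sum_congr rfl hfg, sum_add_distrib, ← mul_sum]
  ring

theorem schur_denominator_identity_general
    {n : ℕ}
    (π p : Fin (n + 1) → ℝ)
    (hπ : ∀ k, π k ∈ Set.Ioo (0 : ℝ) 1) (hπsum : ∑ k, π k = 1)
    (hp : ∀ k, p k ∈ Set.Ioc (0 : ℝ) 1)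
    (s : Fin (n + 1) → ℝ)
    (hs : ∀ k, s k = p k * ∑ l ∈ univ.erase k, π l * (1 - p l)) :
    (∀ k, 0 < 1 - (1 - p k) * π k) ∧
    (∑ k, π k * p k) *
        (1 - ∑ k ∈ univ.erase 0, π k * p k / (1 - (1 - p k) * π k)) -
      (∑ k ∈ univ.erase 0, π k * s k / (1 - (1 - p k) * π k)) = π 0 * p 0 := by
  have hD : ∀ k, 0 < 1 - (1 - p k) * π k := fun k =>
    one_sub_one_sub_mul_pos (hp k).1 (hp k).2 (hπ k).2.le
  refine ⟨hD, ?_⟩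
  have hterm : ∀ k ∈ univ.erase 0, (∑ l, π l * p l) * (π k * p k / (1 - (1 - p k) * π k)) +
      π k * s k / (1 - (1 - p k) * π k) = π k * p k := fun k _ => by
    rw [hs k, sum_erase_mul_one_sub π p hπsum k]
    exact mul_div_add_mul_div_eq (hD k).ne'
  rw [mul_one_sub_sum_sub_sum _ _ _ _ _ hterm, sum_erase_eq_sub (mem_univ 0)]
  ring

/-- **Key algebraic identity in the proof of Theorem 4 (symmetric communication).**
With confidence weights `π_k ∈ (0,1)` summing to `1`, participation probabilities
`p_k ∈ (0,1]`, and `s_k = p_k ∑_{ℓ≠k} π_ℓ (1-p_ℓ)`, the denominator arising from the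
Schur-complement computation simplifies to `π_1 p_1`.  Agents are indexed by `Fin (n+1)`
with agent `1` corresponding to index `0`, and `n ≥ 1` so that `K = n + 1 ≥ 2`. -/
theorem schur_denominator_identity
    {n : ℕ} (hn : 1 ≤ n)
    (π p : Fin (n + 1) → ℝ)
    (hπ : ∀ k, π k ∈ Set.Ioo (0 : ℝ) 1) (hπsum : ∑ k, π k = 1)
    (hp : ∀ k, p k ∈ Set.Ioc (0 : ℝ) 1)
    (s : Fin (n + 1) → ℝ)
    (hs : ∀ k, s k = p k * ∑ l ∈ univ.erase k, π l * (1 - p l)) :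
    (∀ k, 0 < 1 - (1 - p k) * π k) ∧
    (∑ k, π k * p k) *
        (1 - ∑ k ∈ univ.erase 0, π k * p k / (1 - (1 - p k) * π k)) -
      (∑ k ∈ univ.erase 0, π k * s k / (1 - (1 - p k) * π k)) = π 0 * p 0 :=
  schur_denominator_identity_general π p hπ hπsum hp s hs
end

section
/- Under the setup of the previous identity (K ≥ 2, π_k ∈ (0,1) with ∑_k π_k = 1, p_k ∈ (0,1], ã = (π_2 p_2,…,π_K p_K)ᵀ, p̃ = (p_2,…,p_K)ᵀ, M₁₁ = P̃ − (I−P̃)Ã − p̃ ãᵀ with P̃ = diag(p̃), Ã = diag(ã)), for each index k ∈ {2,…,K}, the k-th entry of the row vector ãᵀ M₁₁^{-1} equals π_k / ( ( 1 − (1−p_k) π_k ) · ( 1 − ∑_{ℓ≠1} π_ℓ p_ℓ / ( 1 − (1−p_ℓ) π_ℓ ) ) ). -/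
/-!
Write `M₁₁ = D − p̃ ãᵀ` with `D = diag (p_k (1 − (1 − p_k) π_k))`. A row vector `x` with
`x M₁₁ = ãᵀ` is a multiple of `ãᵀ D⁻¹`, and pairing with `p̃` fixes the multiple as
`1 / (1 − ãᵀ D⁻¹ p̃)` (Sherman–Morrison). Here
`ãᵀ D⁻¹ p̃ = ∑_{ℓ≠1} π_ℓ p_ℓ / (1 − (1 − p_ℓ) π_ℓ) ≤ ∑_{ℓ≠1} π_ℓ = 1 − π_1 < 1`,
which is also what makes `M₁₁` invertible.
-/

open Finset Matrix

namespace Matrix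

section CommRing

variable {ι R : Type*} [Fintype ι] [DecidableEq ι] [CommRing R] {d u v : ι → R}

theorem diagonal_sub_one_sub_diagonal_mul_diagonal (a b : ι → R) :
    diagonal a - (1 - diagonal a) * diagonal b = diagonal fun j => a j - (1 - a j) * b j := by
  rw [← diagonal_one, diagonal_sub, diagonal_mul_diagonal, diagonal_sub]

theorem vecMul_diagonal_sub_vecMulVec_apply (x : ι → R) (j : ι) :
    (x ᵥ* (diagonal d - vecMulVec u v)) j = x j * d j - (x ⬝ᵥ u) * v j := by
  rw [vecMul_sub, vecMul_vecMulVec, Pi.sub_apply, vecMul_diagonal, Pi.smul_apply, smul_eq_mul]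

end CommRing

variable {ι K : Type*} [Fintype ι] [DecidableEq ι] [Field K] {d u v : ι → K}

theorem isUnit_diagonal_sub_vecMulVec (hd : ∀ i, d i ≠ 0) (hs : ∑ i, v i * u i / d i ≠ 1) :
    IsUnit (diagonal d - vecMulVec u v) := by
  refine vecMul_injective_iff_isUnit.1 fun x y hxy => funext fun j => sub_eq_zero.1 ?_
  set z := x - y
  have hz : ∀ j, z j * d j = (z ⬝ᵥ u) * v j := fun j => by
    rw [← sub_eq_zero, ← vecMul_diagonal_sub_vecMulVec_apply, sub_vecMul]
    exact sub_eq_zero.2 (congrFun hxy j)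
  -- `z = (z ⬝ᵥ u) • (v / d)`, and pairing this with `u` gives `(z ⬝ᵥ u) * (1 - s) = 0`.
  have hzu : z ⬝ᵥ u = 0 := by
    have hfix : z ⬝ᵥ u * (1 - ∑ i, v i * u i / d i) = 0 := by
      rw [mul_sub, mul_one, sub_eq_zero, Finset.mul_sum]
      refine Finset.sum_congr rfl fun i _ => ?_
      rw [eq_div_iff_mul_eq (hd i) |>.2 (hz i)]
      ring
    exact (mul_eq_zero.1 hfix).resolve_right (sub_ne_zero.2 (Ne.symm hs))
  have hzj := hz j
  rw [hzu, zero_mul] at hzj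
  exact (mul_eq_zero.1 hzj).resolve_right (hd j)

theorem vecMul_diagonal_sub_vecMulVec_inv (hd : ∀ i, d i ≠ 0) (hs : ∑ i, v i * u i / d i ≠ 1) :
    v ᵥ* (diagonal d - vecMulVec u v)⁻¹ = fun j => v j / (d j * (1 - ∑ i, v i * u i / d i)) := by
  set M := diagonal d - vecMulVec u v
  set s := ∑ i, v i * u i / d i
  set x : ι → K := fun j => v j / (d j * (1 - s))
  have hs' : 1 - s ≠ 0 := sub_ne_zero.2 (Ne.symm hs)
  have hxu : x ⬝ᵥ u = s / (1 - s) := by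
    simp only [x, s, dotProduct, Finset.sum_div]
    refine Finset.sum_congr rfl fun i _ => ?_
    field_simp [hd i]
  have hx : x ᵥ* M = v := funext fun j => by
    rw [vecMul_diagonal_sub_vecMulVec_apply, hxu]
    simp only [x]
    field_simp [hd j]
  have hM : IsUnit M.det := (isUnit_diagonal_sub_vecMulVec hd hs).map detMonoidHom
  calc v ᵥ* M⁻¹ = (x ᵥ* M) ᵥ* M⁻¹ := by rw [hx]
    _ = x := by rw [vecMul_vecMul, mul_nonsing_inv _ hM, vecMul_one]

end Matrix

section OrderedField

variable {K : Type*} [Field K] [LinearOrder K] [IsStrictOrderedRing K]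

theorem one_sub_one_sub_mul_pos_s15 {a b : K} (ha0 : 0 ≤ a) (ha1 : a < 1) (hb : 0 ≤ b) :
    0 < 1 - (1 - b) * a := by
  nlinarith

theorem mul_div_one_sub_one_sub_mul_le {a b : K} (ha0 : 0 ≤ a) (ha1 : a < 1) (hb0 : 0 ≤ b)
    (hb1 : b ≤ 1) : a * b / (1 - (1 - b) * a) ≤ a := by
  rw [div_le_iff₀ (one_sub_one_sub_mul_pos_s15 ha0 ha1 hb0)]
  nlinarith [mul_nonneg (sub_nonneg.2 hb1) (sub_nonneg.2 ha1.le)]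

theorem apply_zero_le_one_sub_sum_succ {n : ℕ} {π p : Fin (n + 1) → K}
    (hπ : ∀ k, π k ∈ Set.Ico 0 1) (hπsum : ∑ k, π k = 1) (hp : ∀ k, p k ∈ Set.Icc 0 1) :
    π 0 ≤ 1 - ∑ l : Fin n, π l.succ * p l.succ / (1 - (1 - p l.succ) * π l.succ) := by
  have hle := Finset.sum_le_sum (s := univ) fun (l : Fin n) _ =>
    mul_div_one_sub_one_sub_mul_le (hπ l.succ).1 (hπ l.succ).2 (hp l.succ).1 (hp l.succ).2
  rw [Fin.sum_univ_succ] at hπsum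
  linarith

end OrderedField

theorem row_vector_entries_M11_inv_general
    {n : ℕ}
    (π p : Fin (n + 1) → ℝ)
    (hπ : ∀ k, π k ∈ Set.Ioo (0 : ℝ) 1) (hπsum : ∑ k, π k = 1)
    (hp : ∀ k, p k ∈ Set.Ioc (0 : ℝ) 1)
    (at' pt : Fin n → ℝ)
    (hat : ∀ j : Fin n, at' j = π j.succ * p j.succ)
    (hpt : ∀ j : Fin n, pt j = p j.succ)
    (M11 : Matrix (Fin n) (Fin n) ℝ)
    (hM11 : M11 = Matrix.diagonal pt - (1 - Matrix.diagonal pt) * Matrix.diagonal at'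
      - Matrix.vecMulVec pt at') :
    ∀ j : Fin n, Matrix.vecMul at' M11⁻¹ j =
      π j.succ / ((1 - (1 - p j.succ) * π j.succ) *
        (1 - ∑ l : Fin n, π l.succ * p l.succ / (1 - (1 - p l.succ) * π l.succ))) := by
  have he (l : Fin n) : 0 < 1 - (1 - p l.succ) * π l.succ :=
    one_sub_one_sub_mul_pos_s15 (hπ l.succ).1.le (hπ l.succ).2 (hp l.succ).1.le
  have hd (l : Fin n) : pt l - (1 - pt l) * at' l = p l.succ * (1 - (1 - p l.succ) * π l.succ) := by
    rw [hpt, hat]; ring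
  have hs : ∑ l, at' l * pt l / (pt l - (1 - pt l) * at' l) =
      ∑ l : Fin n, π l.succ * p l.succ / (1 - (1 - p l.succ) * π l.succ) :=
    Finset.sum_congr rfl fun l _ => by
      rw [hd, hat, hpt, mul_comm (p l.succ), mul_div_mul_right _ _ (hp l.succ).1.ne']
  have hS : 0 < 1 - ∑ l : Fin n, π l.succ * p l.succ / (1 - (1 - p l.succ) * π l.succ) :=
    (hπ 0).1.trans_le <| apply_zero_le_one_sub_sum_succ (fun k => Set.Ioo_subset_Ico_self (hπ k))
      hπsum (fun k => Set.Ioc_subset_Icc_self (hp k))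
  rw [hM11, diagonal_sub_one_sub_diagonal_mul_diagonal,
    vecMul_diagonal_sub_vecMulVec_inv (fun l => hd l ▸ mul_ne_zero (hp l.succ).1.ne' (he l).ne')
      (hs ▸ (sub_pos.1 hS).ne)]
  intro j
  dsimp only
  rw [hs, hd, hat, mul_comm (π _), mul_assoc, mul_div_mul_left _ _ (hp j.succ).1.ne']

/-- **Entries of the row vector `ãᵀ M₁₁⁻¹` (proof of Theorem 4).**
Agents are indexed by `Fin (n+1)` (so `K = n + 1 ≥ 2`) with the intervened agent `1`
at index `0`; the reduced index set `{2,…,K}` is realized as `Fin n` via `Fin.succ`.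
With `ã = (π_k p_k)_{k≠1}`, `p̃ = (p_k)_{k≠1}` and
`M₁₁ = P̃ − (I − P̃)Ã − p̃ ãᵀ`, for each `k ∈ {2,…,K}` the `k`-th entry of `ãᵀ M₁₁⁻¹`
equals `π_k / ((1 − (1−p_k) π_k) (1 − ∑_{ℓ≠1} π_ℓ p_ℓ / (1 − (1−p_ℓ) π_ℓ)))`. -/
theorem row_vector_entries_M11_inv
    {n : ℕ} (hn : 1 ≤ n)
    (π p : Fin (n + 1) → ℝ)
    (hπ : ∀ k, π k ∈ Set.Ioo (0 : ℝ) 1) (hπsum : ∑ k, π k = 1)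
    (hp : ∀ k, p k ∈ Set.Ioc (0 : ℝ) 1)
    (at' pt : Fin n → ℝ)
    (hat : ∀ j : Fin n, at' j = π j.succ * p j.succ)
    (hpt : ∀ j : Fin n, pt j = p j.succ)
    (M11 : Matrix (Fin n) (Fin n) ℝ)
    (hM11 : M11 = Matrix.diagonal pt - (1 - Matrix.diagonal pt) * Matrix.diagonal at'
      - Matrix.vecMulVec pt at') :
    ∀ j : Fin n, Matrix.vecMul at' M11⁻¹ j =
      π j.succ / ((1 - (1 - p j.succ) * π j.succ) *
        (1 - ∑ l : Fin n, π l.succ * p l.succ / (1 - (1 - p l.succ) * π l.succ))) :=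
  row_vector_entries_M11_inv_general π p hπ hπsum hp at' pt hat hpt M11 hM11
end
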